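/- arXiv:1506.08967 — 9 statements merged into one kernel-verified Lean document; each statement's English description precedes it below -/
import Mathlib

section
/- Let G be a finite group and H a subgroup of G. For any integer n, the number of elements g in G such that g^n lies in H is divisible by the order of H. -/
open MulAction

/-- The cardinality of a "transporter" `{g : g • y = σ y}` is constant along orbits,
when `σ` is equivariant. -/
private lemma card_transporter_smul {G Y : Type*} [Group G] [MulAction G Y] (σ : Y → Y)
    (hσ : ∀ (g : G) (y : Y), σ (g • y) = g • σ y) (a : G) (y : Y) :
    Nat.card {g : G // g • (a • y) = σ (a • y)} = Nat.card {g : G // g • y = σ y} := by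
  apply Nat.card_congr
  refine ⟨fun g => ⟨a⁻¹ * g.1 * a, ?_⟩, fun g => ⟨a * g.1 * a⁻¹, ?_⟩,
    fun g => Subtype.ext (by group), fun g => Subtype.ext (by group)⟩
  · rw [mul_smul, mul_smul, g.2, hσ, inv_smul_smul]
  · rw [hσ, mul_smul, mul_smul, inv_smul_smul, g.2]

/-- If the transporter is nonempty, it has the cardinality of the stabilizer. -/
private lemma card_transporter_eq_stabilizer {G Y : Type*} [Group G] [MulAction G Y]
    (σ : Y → Y) {y : Y} {g₀ : G} (h : g₀ • y = σ y) :
    Nat.card {g : G // g • y = σ y} = Nat.card (stabilizer G y) := by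
  apply Nat.card_congr
  refine ⟨fun g => ⟨g₀⁻¹ * g.1, ?_⟩, fun u => ⟨g₀ * u.1, ?_⟩,
    fun g => Subtype.ext (by group), fun u => Subtype.ext (by group)⟩
  · rw [mem_stabilizer_iff, mul_smul, g.2, ← h, inv_smul_smul]
  · rw [mul_smul, mem_stabilizer_iff.mp u.2, h]

/-- Key counting lemma: if `σ` is an equivariant map, then the number of pairs `(g, y)` with
`g • y = σ y` is divisible by the order of the group. -/
private lemma card_dvd_sum_transporter {G Y : Type*} [Group G] [Fintype G] [MulAction G Y]
    [Fintype Y] (σ : Y → Y) (hσ : ∀ (g : G) (y : Y), σ (g • y) = g • σ y) :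
    Fintype.card G ∣ ∑ y : Y, Nat.card {g : G // g • y = σ y} := by
  classical
  have hconst : ∀ (a : G) (y : Y),
      Nat.card {g : G // g • (a • y) = σ (a • y)} = Nat.card {g : G // g • y = σ y} :=
    card_transporter_smul σ hσ
  have hsum : ∑ y : Y, Nat.card {g : G // g • y = σ y} =
      ∑ s : (Σ ω : orbitRel.Quotient G Y, orbit G ω.out),
        Nat.card {g : G // g • ((selfEquivSigmaOrbits G Y).symm s)
          = σ ((selfEquivSigmaOrbits G Y).symm s)} :=
    Fintype.sum_equiv (selfEquivSigmaOrbits G Y) _ _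
      (fun y => by rw [Equiv.symm_apply_apply])
  rw [hsum, ← Finset.univ_sigma_univ, Finset.sum_sigma]
  apply Finset.dvd_sum
  intro ω _
  have hz : ∀ z : orbit G ω.out,
      Nat.card {g : G // g • ((selfEquivSigmaOrbits G Y).symm ⟨ω, z⟩)
          = σ ((selfEquivSigmaOrbits G Y).symm ⟨ω, z⟩)}
        = Nat.card {g : G // g • (ω.out : Y) = σ ω.out} := by
    intro z
    have hval : (selfEquivSigmaOrbits G Y).symm ⟨ω, z⟩ = (z : Y) := rfl
    obtain ⟨a, ha⟩ := MulAction.mem_orbit_iff.mp z.2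
    rw [hval, ← ha, hconst]
  rw [Finset.sum_congr rfl (fun z _ => hz z), Finset.sum_const, Finset.card_univ, smul_eq_mul]
  simp only [← Nat.card_eq_fintype_card]
  by_cases hgood : ∃ g₀ : G, g₀ • (ω.out : Y) = σ ω.out
  · obtain ⟨g₀, hg₀⟩ := hgood
    rw [card_transporter_eq_stabilizer σ hg₀]
    have horb : Nat.card (orbit G (Quotient.out ω)) * Nat.card (stabilizer G (Quotient.out ω))
        = Nat.card G := by
      simp only [Nat.card_eq_fintype_card]
      exact card_orbit_mul_card_stabilizer_eq_card_group G (Quotient.out ω)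
    rw [horb]
  · have hempty : IsEmpty {g : G // g • (ω.out : Y) = σ ω.out} :=
      ⟨fun g => hgood ⟨g.1, g.2⟩⟩
    have hzero : Nat.card {g : G // g • (ω.out : Y) = σ ω.out} = 0 := Nat.card_of_isEmpty
    rw [hzero, Nat.mul_zero]
    exact dvd_zero _

/-- Double counting swap for cardinalities of subtypes. -/
private lemma sum_nat_card_swap {A B : Type*} [Fintype A] [Fintype B] (P : A → B → Prop) :
    ∑ a : A, Nat.card {b : B // P a b} = ∑ b : B, Nat.card {a : A // P a b} := by
  classical
  calc ∑ a : A, Nat.card {b : B // P a b}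
      = ∑ a : A, Fintype.card {b : B // P a b} := by
        simp only [Nat.card_eq_fintype_card]
    _ = Fintype.card {x : A × B // P x.1 x.2} := by
        rw [Fintype.card_congr (Equiv.subtypeProdEquivSigmaSubtype P), Fintype.card_sigma]
    _ = Fintype.card {x : B × A // P x.2 x.1} :=
        Fintype.card_congr (Equiv.subtypeEquiv (Equiv.prodComm A B) (fun x => Iff.rfl))
    _ = ∑ b : B, Fintype.card {a : A // P a b} := by
        rw [Fintype.card_congr (Equiv.subtypeProdEquivSigmaSubtype fun (b : B) (a : A) => P a b),
          Fintype.card_sigma]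
    _ = ∑ b : B, Nat.card {a : A // P a b} := by
        simp only [Nat.card_eq_fintype_card]

/-- Sequences `f : ZMod m → X` with `g • f i = f (i+1)` correspond to fixed points of `g ^ m`. -/
private lemma card_twisted_seq {G X : Type*} [Group G] [MulAction G X] (m : ℕ) [NeZero m]
    (g : G) :
    Nat.card {f : ZMod m → X // ∀ i, g • f i = f (i + 1)} =
      Nat.card {x : X // g ^ m • x = x} := by
  apply Nat.card_congr
  have key : ∀ (f : ZMod m → X), (∀ i, g • f i = f (i + 1)) →
      ∀ k : ℕ, g ^ k • f 0 = f (k : ZMod m) := by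
    intro f hf k
    induction k with
    | zero => simp
    | succ k ih =>
      rw [pow_succ', mul_smul, ih, hf, Nat.cast_add, Nat.cast_one]
  refine ⟨fun f => ⟨f.1 0, ?_⟩, fun x => ⟨fun i => g ^ i.val • x.1, ?_⟩, ?_, ?_⟩
  · rw [key f.1 f.2 m, ZMod.natCast_self]
  · -- constraint for the inverse map
    intro i
    show g • g ^ i.val • x.1 = g ^ (i + 1).val • x.1
    have hmod : ∀ k : ℕ, g ^ k • x.1 = g ^ (k % m) • x.1 := by
      have haux : ∀ q r : ℕ, g ^ (m * q + r) • x.1 = g ^ r • x.1 := by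
        intro q r
        induction q with
        | zero => simp
        | succ q ih =>
          rw [show m * (q + 1) + r = m * q + r + m by ring, pow_add, mul_smul, x.2, ih]
      intro k
      conv_lhs => rw [← Nat.div_add_mod k m, haux]
    have hval : (i + 1).val = (i.val + 1) % m := by
      rw [ZMod.val_add, ZMod.val_one_eq_one_mod, Nat.add_mod, Nat.mod_mod_of_dvd _ dvd_rfl,
        ← Nat.add_mod]
    rw [← mul_smul, ← pow_succ', hval]
    exact hmod _
  · intro f
    apply Subtype.ext
    funext i
    show g ^ i.val • f.1 0 = f.1 i
    rw [key f.1 f.2 i.val, ZMod.natCast_zmod_val]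
  · intro x
    apply Subtype.ext
    show g ^ (0 : ZMod m).val • x.1 = x.1
    rw [ZMod.val_zero, pow_zero, one_smul]

/-- The fixed points of `g ^ m` on each point of `G ⧸ H` count solutions of `g ^ m ∈ H`. -/
private lemma card_fixed_coset {G : Type*} [Group G] (H : Subgroup G) (m : ℕ) (x : G ⧸ H) :
    Nat.card {g : G // g ^ m • x = x} = Nat.card {g : G // g ^ m ∈ H} := by
  induction x using QuotientGroup.induction_on with
  | H a =>
  apply Nat.card_congr
  have conj_pow' : ∀ (b : G), (a⁻¹ * b * a) ^ m = a⁻¹ * b ^ m * a := by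
    intro b
    have := conj_pow (a := a⁻¹) (b := b) (i := m)
    rwa [inv_inv] at this
  refine ⟨fun g => ⟨a⁻¹ * g.1 * a, ?_⟩, fun g => ⟨a * g.1 * a⁻¹, ?_⟩,
    fun g => Subtype.ext (by group), fun g => Subtype.ext (by group)⟩
  · have hg : (g.1 ^ m) • ((a : G) : G ⧸ H) = ((a : G) : G ⧸ H) := g.2
    rw [MulAction.Quotient.smul_mk, smul_eq_mul] at hg
    have h2 := inv_mem (QuotientGroup.eq.mp hg)
    have h3 : ((g.1 ^ m * a)⁻¹ * a)⁻¹ = a⁻¹ * g.1 ^ m * a := by group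
    rw [h3] at h2
    rw [conj_pow']
    exact h2
  · show ((a * g.1 * a⁻¹) ^ m) • ((a : G) : G ⧸ H) = ((a : G) : G ⧸ H)
    rw [conj_pow, MulAction.Quotient.smul_mk, smul_eq_mul]
    apply (QuotientGroup.eq).mpr
    have h3 : (a * g.1 ^ m * a⁻¹ * a)⁻¹ * a = (g.1 ^ m)⁻¹ := by group
    rw [h3]
    exact inv_mem g.2

/-- Main lemma: natural number exponent version. -/
private lemma key_lemma (G : Type*) [Group G] [Fintype G] (H : Subgroup G) (m : ℕ) [NeZero m] :
    Nat.card H ∣ Nat.card {g : G // g ^ m ∈ H} := by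
  classical
  letI : Fintype (G ⧸ H) := Fintype.ofFinite _
  set X := G ⧸ H with hX
  let σ : (ZMod m → X) → (ZMod m → X) := fun f i => f (i + 1)
  have hσ : ∀ (g : G) (f : ZMod m → X), σ (g • f) = g • σ f := fun g f => rfl
  have h1 := card_dvd_sum_transporter σ hσ
  have h2 : ∑ f : ZMod m → X, Nat.card {g : G // g • f = σ f}
      = ∑ g : G, Nat.card {f : ZMod m → X // g • f = σ f} :=
    sum_nat_card_swap (fun (f : ZMod m → X) (g : G) => g • f = σ f)
  have h3 : ∀ g : G, Nat.card {f : ZMod m → X // g • f = σ f}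
      = Nat.card {x : X // g ^ m • x = x} := by
    intro g
    rw [show Nat.card {f : ZMod m → X // g • f = σ f}
        = Nat.card {f : ZMod m → X // ∀ i, g • f i = f (i + 1)} from
      Nat.card_congr (Equiv.subtypeEquivRight (fun f => by
        simp [σ, funext_iff, Pi.smul_apply]))]
    exact card_twisted_seq m g
  have h4 : ∑ g : G, Nat.card {x : X // g ^ m • x = x}
      = ∑ x : X, Nat.card {g : G // g ^ m • x = x} :=
    sum_nat_card_swap (fun (g : G) (x : X) => g ^ m • x = x)
  have h5 : ∀ x : X, Nat.card {g : G // g ^ m • x = x} = Nat.card {g : G // g ^ m ∈ H} :=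
    card_fixed_coset H m
  have hXF : Fintype.card G ∣ Fintype.card X * Nat.card {g : G // g ^ m ∈ H} := by
    calc Fintype.card G ∣ ∑ f : ZMod m → X, Nat.card {g : G // g • f = σ f} := h1
      _ = Fintype.card X * Nat.card {g : G // g ^ m ∈ H} := by
          rw [h2, Finset.sum_congr rfl (fun g _ => h3 g), h4,
            Finset.sum_congr rfl (fun x _ => h5 x), Finset.sum_const, Finset.card_univ,
            smul_eq_mul]
  have hlag : Fintype.card G = Fintype.card X * Nat.card H := by
    have := Subgroup.card_eq_card_quotient_mul_card_subgroup H
    simpa [Nat.card_eq_fintype_card] using this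
  rw [hlag] at hXF
  have hXpos : Fintype.card X ≠ 0 := Fintype.card_ne_zero
  exact (mul_dvd_mul_iff_left hXpos).mp hXF

theorem stmt_0 (G : Type*) [Group G] [Fintype G] (H : Subgroup G) (n : ℤ) :
    Nat.card H ∣ Nat.card {g : G | g ^ n ∈ H} := by
  classical
  have hset : {g : G | g ^ n ∈ H} = {g : G | g ^ n.natAbs ∈ H} := by
    ext g
    simp only [Set.mem_setOf_eq]
    rcases Int.natAbs_eq n with h | h
    · conv_lhs => rw [h]
      rw [zpow_natCast]
    · conv_lhs => rw [h]
      rw [zpow_neg, zpow_natCast, inv_mem_iff]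
  rw [hset]
  rcases Nat.eq_zero_or_pos n.natAbs with hm | hm
  · rw [hm]
    have huniv : {g : G | g ^ (0 : ℕ) ∈ H} = Set.univ := by
      ext g; simp [H.one_mem]
    rw [huniv, Nat.card_univ]
    exact H.card_subgroup_dvd_card
  · haveI : NeZero n.natAbs := ⟨hm.ne'⟩
    exact key_lemma G H n.natAbs
end

section
/- Let G be a finite group and H a subgroup of G. The number of pairs (x,y) ∈ G² such that the commutator [x,y] = x*y*x⁻¹*y⁻¹ lies in H is divisible by |H|. -/
open MulAction Finset

/-- Key orbit-counting lemma: if a finite group `K` acts on a finite type `α` and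
`w : α → ℕ` is constant on orbits with `|Stab(a)| ∣ w a` for all `a`, then
`|K|` divides `∑ a, w a`. -/
lemma aux_orbit_sum {K α : Type*} [Group K] [Fintype K] [Fintype α] [MulAction K α]
    (w : α → ℕ) (hc : ∀ (k : K) (a : α), w (k • a) = w a)
    (hd : ∀ a : α, Nat.card (stabilizer K a) ∣ w a) :
    Fintype.card K ∣ ∑ a : α, w a := by
  classical
  have hmaps : ∀ a ∈ (univ : Finset α),
      (Quotient.mk'' a : orbitRel.Quotient K α) ∈ (univ : Finset (orbitRel.Quotient K α)) :=
    fun _ _ => mem_univ _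
  rw [← Finset.sum_fiberwise_of_maps_to hmaps]
  refine Finset.dvd_sum fun q _ => ?_
  set b := Quotient.out q with hb
  have hqb : (Quotient.mk'' b : orbitRel.Quotient K α) = q := Quotient.out_eq' q
  have hfiber : (univ.filter fun a => (Quotient.mk'' a : orbitRel.Quotient K α) = q)
      = (orbit K b).toFinset := by
    ext a
    simp only [mem_filter, mem_univ, true_and, Set.mem_toFinset]
    rw [← hqb]
    exact ⟨fun h => Quotient.exact' h, fun h => Quotient.sound' h⟩
  have hconst : ∀ a ∈ (univ.filter fun a =>
      (Quotient.mk'' a : orbitRel.Quotient K α) = q), w a = w b := by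
    intro a ha
    rw [hfiber, Set.mem_toFinset] at ha
    obtain ⟨k, hk⟩ := ha
    rw [← hk, hc]
  rw [Finset.sum_congr rfl hconst, Finset.sum_const, smul_eq_mul, hfiber,
    Set.toFinset_card]
  obtain ⟨m, hm⟩ := hd b
  have horb : Fintype.card (orbit K b) * Fintype.card (stabilizer K b) = Fintype.card K :=
    card_orbit_mul_card_stabilizer_eq_card_group K b
  have hstab : Nat.card (stabilizer K b) = Fintype.card (stabilizer K b) :=
    Nat.card_eq_fintype_card
  exact ⟨m, by rw [hm, hstab, ← horb]; ring⟩

/-- Cardinality of centralizers is invariant under conjugation. -/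
lemma card_centralizer_conj {G : Type*} [Group G] (u x : G) :
    Nat.card (Subgroup.centralizer {u * x * u⁻¹}) = Nat.card (Subgroup.centralizer {x}) := by
  refine Nat.card_congr ⟨fun z => ⟨u⁻¹ * z * u, ?_⟩, fun z => ⟨u * z * u⁻¹, ?_⟩, ?_, ?_⟩
  · obtain ⟨z, hz⟩ := z
    rw [Subgroup.mem_centralizer_singleton_iff] at hz ⊢
    calc u⁻¹ * z * u * x = u⁻¹ * (z * (u * x * u⁻¹)) * u := by group
      _ = u⁻¹ * ((u * x * u⁻¹) * z) * u := by rw [hz]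
      _ = x * (u⁻¹ * z * u) := by group
  · obtain ⟨z, hz⟩ := z
    rw [Subgroup.mem_centralizer_singleton_iff] at hz ⊢
    calc u * z * u⁻¹ * (u * x * u⁻¹) = u * (z * x) * u⁻¹ := by group
      _ = u * (x * z) * u⁻¹ := by rw [hz]
      _ = (u * x * u⁻¹) * (u * z * u⁻¹) := by group
  · intro z; ext; simp; group
  · intro z; ext; simp; group

theorem stmt_1 (G : Type*) [Group G] [Fintype G] (H : Subgroup G) :
    Nat.card H ∣ Nat.card {p : G × G | p.1⁻¹ * p.2⁻¹ * p.1 * p.2 ∈ H} := by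
  classical
  letI : Fintype (ConjAct G) := inferInstanceAs (Fintype G)
  set H' : Subgroup (ConjAct G) := H.map ConjAct.toConjAct.toMonoidHom with hH'
  letI : Fintype H' := Fintype.ofFinite H'
  have hcardH : Nat.card H = Fintype.card H' := by
    rw [← Nat.card_eq_fintype_card]
    exact Nat.card_congr
      (Subgroup.equivMapOfInjective H _ ConjAct.toConjAct.injective).toEquiv
  set P : G × G → Prop := fun q => q.2 ∈ H ∧ ∃ y : G, y⁻¹ * q.1 * y = q.1 * q.2 with hP
  set w : G × G → ℕ :=
    fun q => if P q then Nat.card (Subgroup.centralizer {q.1}) else 0 with hw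
  -- `H'` acts on `G × G` by conjugation on both components.
  have key : Fintype.card H' ∣ ∑ a : G × G, w a := by
    refine aux_orbit_sum w ?_ ?_
    · rintro k ⟨x, c⟩
      set u : G := ConjAct.ofConjAct (k : ConjAct G) with hu
      have huH : u ∈ H := by
        obtain ⟨k, hk⟩ := k
        rw [hH'] at hk
        obtain ⟨h, hh, hhk⟩ := hk
        simpa [hu, ← hhk] using hh
      have hsmul : k • ((x, c) : G × G) = (u * x * u⁻¹, u * c * u⁻¹) := by
        show ((k : ConjAct G) • x, (k : ConjAct G) • c) = _
        rw [ConjAct.smul_def, ConjAct.smul_def, ← hu]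
      rw [hsmul]
      show (if P (u * x * u⁻¹, u * c * u⁻¹)
          then Nat.card (Subgroup.centralizer {u * x * u⁻¹}) else 0)
        = (if P (x, c) then Nat.card (Subgroup.centralizer {x}) else 0)
      have hPiff : P (u * x * u⁻¹, u * c * u⁻¹) ↔ P (x, c) := by
        constructor
        · rintro ⟨h1, y, hy⟩
          refine ⟨?_, ⟨u⁻¹ * y * u, ?_⟩⟩
          · have := H.mul_mem (H.mul_mem (H.inv_mem huH) h1) huH
            simpa [mul_assoc] using this
          · calc (u⁻¹ * y * u)⁻¹ * x * (u⁻¹ * y * u)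
                = u⁻¹ * (y⁻¹ * (u * x * u⁻¹) * y) * u := by group
              _ = u⁻¹ * ((u * x * u⁻¹) * (u * c * u⁻¹)) * u := by rw [hy]
              _ = x * c := by group
        · rintro ⟨h1, y, hy⟩
          refine ⟨H.mul_mem (H.mul_mem huH h1) (H.inv_mem huH), ⟨u * y * u⁻¹, ?_⟩⟩
          calc (u * y * u⁻¹)⁻¹ * (u * x * u⁻¹) * (u * y * u⁻¹)
              = u * (y⁻¹ * x * y) * u⁻¹ := by group
            _ = u * (x * c) * u⁻¹ := by rw [hy]
            _ = (u * x * u⁻¹) * (u * c * u⁻¹) := by group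
      by_cases hp : P (x, c)
      · rw [if_pos (hPiff.mpr hp), if_pos hp]
        exact card_centralizer_conj u x
      · rw [if_neg (fun h => hp (hPiff.mp h)), if_neg hp]
    · intro a
      by_cases hp : P a
      · have hwa : w a = Nat.card (Subgroup.centralizer {a.1}) := by
          show (if P a then Nat.card (Subgroup.centralizer {a.1}) else 0) = _
          rw [if_pos hp]
        rw [hwa]
        set f : stabilizer H' a →* G :=
          ConjAct.ofConjAct.toMonoidHom.comp
            (H'.subtype.comp (stabilizer H' a).subtype) with hf
        have hmem : ∀ k : stabilizer H' a, f k ∈ Subgroup.centralizer {a.1} := by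
          intro k
          have hk : (k : H') • a = a := k.2
          have hk1 : ((k : H') : ConjAct G) • a.1 = a.1 := by
            have := congrArg Prod.fst hk
            exact this
          rw [ConjAct.smul_def] at hk1
          rw [Subgroup.mem_centralizer_singleton_iff]
          have h2 := congrArg
            (fun t => t * ConjAct.ofConjAct ((k : H') : ConjAct G)) hk1
          simpa [hf, mul_assoc] using h2
        have hinj : Function.Injective
            (f.codRestrict (Subgroup.centralizer {a.1}) hmem) := by
          intro k1 k2 h12
          have h3 : f k1 = f k2 := by
            have h5 := congrArg (fun z : Subgroup.centralizer {a.1} => (z : G)) h12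
            exact h5
          have h4 : ((k1 : H') : ConjAct G) = ((k2 : H') : ConjAct G) :=
            ConjAct.ofConjAct.injective h3
          exact Subtype.ext (Subtype.ext h4)
        exact Subgroup.card_dvd_of_injective _ hinj
      · have hwa : w a = 0 := by
          show (if P a then Nat.card (Subgroup.centralizer {a.1}) else 0) = 0
          rw [if_neg hp]
        rw [hwa]
        exact dvd_zero _
  -- the original count equals the weighted sum
  set Sfin : Finset (G × G) :=
    univ.filter (fun p : G × G => p.1⁻¹ * p.2⁻¹ * p.1 * p.2 ∈ H) with hSfin
  set Ωfin : Finset (G × G) := univ.filter P with hΩ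
  set φ : G × G → G × G := fun p => (p.1, p.1⁻¹ * p.2⁻¹ * p.1 * p.2) with hφ
  have h1count : Nat.card {p : G × G | p.1⁻¹ * p.2⁻¹ * p.1 * p.2 ∈ H} = Sfin.card := by
    have hset : {p : G × G | p.1⁻¹ * p.2⁻¹ * p.1 * p.2 ∈ H} = ↑Sfin := by
      ext p; simp [hSfin]
    rw [hset, Nat.card_coe_set_eq, Set.ncard_coe_finset]
  have hmaps : ∀ p ∈ Sfin, φ p ∈ Ωfin := by
    intro p hp
    rw [hSfin, mem_filter] at hp
    rw [hΩ, mem_filter]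
    exact ⟨mem_univ _, hp.2, ⟨p.2, by rw [hφ]; group⟩⟩
  have h2 : Sfin.card = ∑ q ∈ Ωfin, (Sfin.filter fun p => φ p = q).card :=
    Finset.card_eq_sum_card_fiberwise hmaps
  have h3 : ∀ q ∈ Ωfin, (Sfin.filter fun p => φ p = q).card
      = Nat.card (Subgroup.centralizer {q.1}) := by
    intro q hq
    rw [hΩ, mem_filter] at hq
    obtain ⟨-, hqH, y₀, hy₀⟩ := hq
    have hcard : Nat.card (Subgroup.centralizer {q.1})
        = (univ.filter fun z : G => z * q.1 = q.1 * z).card := by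
      have hcoe : ((Subgroup.centralizer {q.1} : Subgroup G) : Set G)
          = ↑(univ.filter fun z : G => z * q.1 = q.1 * z) := by
        ext z
        simp [Subgroup.mem_centralizer_singleton_iff]
      rw [← SetLike.coe_sort_coe, Nat.card_coe_set_eq, hcoe, Set.ncard_coe_finset]
    rw [hcard]
    refine Finset.card_bij' (fun p _ => p.2 * y₀⁻¹) (fun z _ => (q.1, z * y₀)) ?_ ?_ ?_ ?_
    · intro p hp
      rw [mem_filter, hSfin, mem_filter] at hp
      obtain ⟨⟨-, -⟩, hpq⟩ := hp
      have hpq' : (p.1, p.1⁻¹ * p.2⁻¹ * p.1 * p.2) = q := hpq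
      have h1 : p.1 = q.1 := by rw [← hpq']
      have e1 : p.1⁻¹ * p.2⁻¹ * p.1 * p.2 = q.2 := by rw [← hpq']
      rw [h1] at e1
      have e2 : p.2⁻¹ * q.1 * p.2 = q.1 * q.2 := by
        calc p.2⁻¹ * q.1 * p.2 = q.1 * (q.1⁻¹ * p.2⁻¹ * q.1 * p.2) := by group
          _ = q.1 * q.2 := by rw [e1]
      have e3 : p.2⁻¹ * q.1 * p.2 = y₀⁻¹ * q.1 * y₀ := by rw [e2, ← hy₀]
      rw [mem_filter]
      refine ⟨mem_univ _, ?_⟩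
      calc p.2 * y₀⁻¹ * q.1 = p.2 * (y₀⁻¹ * q.1 * y₀) * y₀⁻¹ := by group
        _ = p.2 * (p.2⁻¹ * q.1 * p.2) * y₀⁻¹ := by rw [e3]
        _ = q.1 * (p.2 * y₀⁻¹) := by group
    · intro z hz
      rw [mem_filter] at hz
      obtain ⟨-, hzc⟩ := hz
      have hzq : z⁻¹ * q.1 * z = q.1 := by
        calc z⁻¹ * q.1 * z = z⁻¹ * (q.1 * z) := by group
          _ = z⁻¹ * (z * q.1) := by rw [hzc]
          _ = q.1 := by group
      have ekey : q.1⁻¹ * (z * y₀)⁻¹ * q.1 * (z * y₀) = q.2 := by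
        calc q.1⁻¹ * (z * y₀)⁻¹ * q.1 * (z * y₀)
            = q.1⁻¹ * y₀⁻¹ * (z⁻¹ * q.1 * z) * y₀ := by group
          _ = q.1⁻¹ * y₀⁻¹ * q.1 * y₀ := by rw [hzq]
          _ = q.1⁻¹ * (y₀⁻¹ * q.1 * y₀) := by group
          _ = q.1⁻¹ * (q.1 * q.2) := by rw [hy₀]
          _ = q.2 := by group
      rw [mem_filter, hSfin, mem_filter]
      refine ⟨⟨mem_univ _, ?_⟩, ?_⟩
      · show q.1⁻¹ * (z * y₀)⁻¹ * q.1 * (z * y₀) ∈ H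
        rw [ekey]; exact hqH
      · show (q.1, q.1⁻¹ * (z * y₀)⁻¹ * q.1 * (z * y₀)) = q
        rw [ekey]
    · intro p hp
      rw [mem_filter, hSfin, mem_filter] at hp
      obtain ⟨⟨-, -⟩, hpq⟩ := hp
      have hpq' : (p.1, p.1⁻¹ * p.2⁻¹ * p.1 * p.2) = q := hpq
      have h1 : p.1 = q.1 := by rw [← hpq']
      show (q.1, p.2 * y₀⁻¹ * y₀) = p
      rw [inv_mul_cancel_right, ← h1]
    · intro z _
      show z * y₀ * y₀⁻¹ = z
      rw [mul_inv_cancel_right]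
  have h4 : ∑ a : G × G, w a = ∑ q ∈ Ωfin, Nat.card (Subgroup.centralizer {q.1}) := by
    rw [hΩ, Finset.sum_filter]
  rw [h1count, h2, Finset.sum_congr rfl h3, ← h4, hcardH]
  exact key
end

section
/- For any finite group G and any positive integer n, the order of G divides the number of homomorphisms from the free abelian group ℤⁿ to G; equivalently, |G| divides the number of n-tuples of pairwise commuting elements of G. -/
/-!
Split an `(n+1)`-tuple of pairwise commuting elements as `(g, w)`: then `w` is a commuting
`n`-tuple and `g` centralizes it, i.e. `g` fixes `w` under simultaneous conjugation. So the
commuting `(n+1)`-tuples are the pairs `(g, w)` with `g • w = w`, and by Burnside's lemma their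
number is `|G|` times the number of conjugation orbits of commuting `n`-tuples.
-/

open MulAction ConjAct

section

variable (G : Type*) [Group G] (n : ℕ)

def commutingTuples : SubMulAction (ConjAct G) (Fin n → G) where
  carrier := {v | ∀ i j, Commute (v i) (v j)}
  smul_mem' c v hv i j := by
    simpa only [Pi.smul_apply, smul_eq_mulAut_conj] using (hv i j).map (MulAut.conj (ofConjAct c))

variable {G n}

theorem mem_fixedBy_commutingTuples_iff {c : ConjAct G} {w : commutingTuples G n} :
    w ∈ fixedBy (commutingTuples G n) c ↔ ∀ i, Commute (ofConjAct c) (w.1 i) := by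
  simp only [mem_fixedBy, Subtype.ext_iff, SubMulAction.val_smul, funext_iff, Pi.smul_apply,
    smul_def, mul_inv_eq_iff_eq_mul]
  rfl

theorem pairwise_commute_fin_succ_iff {v : Fin (n + 1) → G} :
    (∀ i j, Commute (v i) (v j)) ↔
      (∀ i : Fin n, Commute (v 0) (v i.succ)) ∧ ∀ i j : Fin n, Commute (v i.succ) (v j.succ) := by
  simp only [Fin.forall_fin_succ, Commute.refl, true_and]
  constructor
  · rintro ⟨h0, hs⟩
    exact ⟨h0, fun i => (hs i).2⟩
  · rintro ⟨h0, hs⟩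
    exact ⟨h0, fun i => ⟨(h0 i).symm, hs i⟩⟩

def commutingTuplesSuccEquiv :
    {v : Fin (n + 1) → G | ∀ i j, Commute (v i) (v j)} ≃
      Σ c : ConjAct G, fixedBy (commutingTuples G n) c where
  toFun v :=
    have hv := pairwise_commute_fin_succ_iff.mp v.2
    ⟨toConjAct (v.1 0), ⟨Fin.tail v.1, hv.2⟩, mem_fixedBy_commutingTuples_iff.mpr hv.1⟩
  invFun x := ⟨Fin.cons (ofConjAct x.1) x.2.1.1,
    pairwise_commute_fin_succ_iff.mpr ⟨mem_fixedBy_commutingTuples_iff.mp x.2.2, x.2.1.2⟩⟩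
  left_inv v := Subtype.ext (Fin.cons_self_tail v.1)
  right_inv _ := rfl

theorem card_commutingTuples_succ :
    Nat.card {v : Fin (n + 1) → G | ∀ i j, Commute (v i) (v j)} =
      Nat.card (orbitRel.Quotient (ConjAct G) (commutingTuples G n)) * Nat.card G := by
  rw [Nat.card_congr (commutingTuplesSuccEquiv.trans
      (sigmaFixedByEquivOrbitsProdGroup (ConjAct G) (commutingTuples G n))), Nat.card_prod]
  rfl

end

theorem stmt_2_general (G : Type*) [Group G] (n : ℕ) (hn : 1 ≤ n) :
    Nat.card G ∣ Nat.card {v : Fin n → G | ∀ i j, Commute (v i) (v j)} := by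
  obtain ⟨m, rfl⟩ := Nat.exists_eq_add_of_le' hn
  rw [card_commutingTuples_succ]
  exact dvd_mul_left _ _

theorem stmt_2 (G : Type*) [Group G] [Fintype G] (n : ℕ) (hn : 1 ≤ n) :
    Nat.card G ∣ Nat.card {v : Fin n → G | ∀ i j, Commute (v i) (v j)} :=
  stmt_2_general G n hn
end

section
/- Let G be a finite group and n a positive integer. The number of n-tuples (g₁, …, gₙ) ∈ Gⁿ that generate G (i.e., the subgroup generated by {g₁,…,gₙ} equals G) is divisible by the order of the commutator subgroup of G. -/
/-!
Induct on `|G|`. If `N = Z(G) ∩ G'` is trivial, conjugation embeds `G'` into `Aut(G)`, and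
`Aut(G)` acts freely on generating tuples, since an automorphism fixing a generating set is the
identity. Otherwise `N` lies in the Frattini subgroup: if `K N = G` with `N` central, then `G/K`
is abelian, so `N ≤ G' ≤ K`. Hence the generating tuples of `G` are exactly the lifts of those of
`G/N`, which multiplies their number by `|N|^n`, while `|G'| = |N| |(G/N)'|`.
-/

open Subgroup Function
open scoped commutatorElement

theorem MulAction.card_dvd_card_of_stabilizer_eq_bot {M β : Type*} [Group M] [MulAction M β]
    (h : ∀ b : β, stabilizer M b = ⊥) : Nat.card M ∣ Nat.card β := by
  rw [Nat.card_congr (selfEquivOrbitsQuotientProd h), Nat.card_prod]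
  exact dvd_mul_left _ _

theorem MonoidHom.card_preimage_of_surjective {G H : Type*} [Group G] [Group H] (f : G →* H)
    (hf : Surjective f) (s : Set H) : Nat.card (f ⁻¹' s) = Nat.card f.ker * Nat.card s := by
  let e := QuotientGroup.quotientKerEquivOfSurjective f hf
  have hpre : f ⁻¹' s = QuotientGroup.mk ⁻¹' (e ⁻¹' s) := rfl
  rw [hpre, QuotientGroup.card_preimage_mk, Nat.card_preimage_of_injective e.injective
    (by simp)]

theorem MonoidHom.card_ker_compLeft {G H : Type*} [Group G] [Group H] (f : G →* H)
    (ι : Type*) [Finite ι] : Nat.card (f.compLeft ι).ker = Nat.card f.ker ^ Nat.card ι := by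
  calc Nat.card (f.compLeft ι).ker
      = Nat.card {v : ι → G // ∀ i, v i ∈ f.ker} :=
        Nat.card_congr (Equiv.subtypeEquivRight fun v => by simp [MonoidHom.mem_ker, funext_iff])
    _ = Nat.card (ι → f.ker) := Nat.card_congr Equiv.subtypePiEquivPi
    _ = Nat.card f.ker ^ Nat.card ι := Nat.card_fun

section Generation

variable {ι G H : Type*} [Group G] [Group H]

theorem closure_range_comp_eq_top {f : G →* H} (hf : Surjective f) {v : ι → G}
    (hv : closure (Set.range v) = ⊤) : closure (Set.range (f ∘ v)) = ⊤ := by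
  rw [Set.range_comp, ← MonoidHom.map_closure, hv, map_top_of_surjective f hf]

theorem commutatorElement_mul_left_of_mem_center {n : G} (hn : n ∈ center G) (g h : G) :
    ⁅g * n, h⁆ = ⁅g, h⁆ :=
  calc ⁅g * n, h⁆ = g * (n * h * n⁻¹) * g⁻¹ * h⁻¹ := by group
    _ = ⁅g, h⁆ := by rw [mul_inv_eq_of_eq_mul (mem_center_iff.1 hn h).symm, commutatorElement_def]

theorem commutatorElement_mul_right_of_mem_center {n : G} (hn : n ∈ center G) (g h : G) :
    ⁅g, h * n⁆ = ⁅g, h⁆ := by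
  rw [← inv_inj, commutatorElement_inv, commutatorElement_inv,
    commutatorElement_mul_left_of_mem_center hn]

theorem commutator_le_of_sup_center_eq_top {K : Subgroup G} (h : K ⊔ center G = ⊤) :
    commutator G ≤ K := by
  rw [commutator_def, commutator_le]
  intro g₁ hg₁ g₂ hg₂
  rw [← h, mem_sup_of_normal_right] at hg₁ hg₂
  obtain ⟨k₁, hk₁, n₁, hn₁, rfl⟩ := hg₁
  obtain ⟨k₂, hk₂, n₂, hn₂, rfl⟩ := hg₂
  rw [commutatorElement_mul_left_of_mem_center hn₁, commutatorElement_mul_right_of_mem_center hn₂]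
  exact K.mul_mem (K.mul_mem (K.mul_mem hk₁ hk₂) (K.inv_mem hk₁)) (K.inv_mem hk₂)

theorem eq_top_of_sup_eq_top_of_le_center_inf_commutator {K N : Subgroup G}
    (hN : N ≤ center G ⊓ commutator G) (h : K ⊔ N = ⊤) : K = ⊤ := by
  have hKZ : K ⊔ center G = ⊤ := top_le_iff.1 (h ▸ sup_le_sup_left (le_inf_iff.1 hN).1 K)
  have hNK : N ≤ K := (le_inf_iff.1 hN).2.trans (commutator_le_of_sup_center_eq_top hKZ)
  rwa [sup_eq_left.2 hNK] at h

theorem map_eq_top_iff_of_ker_le_center_inf_commutator {f : G →* H} (hf : Surjective f)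
    (hker : f.ker ≤ center G ⊓ commutator G) {K : Subgroup G} : K.map f = ⊤ ↔ K = ⊤ := by
  refine ⟨fun hK => eq_top_of_sup_eq_top_of_le_center_inf_commutator hker ?_, fun hK => ?_⟩
  · rw [← comap_map_eq, hK, comap_top]
  · rw [hK, map_top_of_surjective f hf]

variable (ι G) in
def generatingTuples : SubMulAction (MulAut G) (ι → G) where
  carrier := {v | closure (Set.range v) = ⊤}
  smul_mem' φ _ hv := closure_range_comp_eq_top (f := φ.toMonoidHom) φ.surjective hv

theorem stabilizer_generatingTuples_eq_bot (v : generatingTuples ι G) :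
    MulAction.stabilizer (MulAut G) v = ⊥ := by
  refine (eq_bot_iff_forall _).2 fun φ hφ => ?_
  have hφv : Set.EqOn φ.toMonoidHom (MonoidHom.id G) (Set.range v.1) := by
    rintro _ ⟨i, rfl⟩
    exact congrFun (congrArg Subtype.val hφ) i
  ext g
  exact DFunLike.congr_fun (MonoidHom.eq_of_eqOn_dense v.2 hφv) g

variable (ι) in
theorem card_mulAut_dvd_card_generatingTuples :
    Nat.card (MulAut G) ∣ Nat.card (generatingTuples ι G) :=
  MulAction.card_dvd_card_of_stabilizer_eq_bot stabilizer_generatingTuples_eq_bot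

theorem card_dvd_card_mulAut_of_inf_center_eq_bot {K : Subgroup G} (hK : K ⊓ center G = ⊥) :
    Nat.card K ∣ Nat.card (MulAut G) := by
  refine card_dvd_of_injective (MulAut.conj.comp K.subtype) ?_
  rw [← MonoidHom.ker_eq_bot_iff, eq_bot_iff]
  intro k hk
  have hkZ : (k : G) ∈ center G := mem_center_iff.2 fun g =>
    (mul_inv_eq_iff_eq_mul.1 (by simpa using DFunLike.congr_fun (MonoidHom.mem_ker.1 hk) g)).symm
  have hk1 : (k : G) = 1 := mem_bot.1 (hK ▸ mem_inf.2 ⟨k.2, hkZ⟩)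
  exact mem_bot.2 (Subtype.ext hk1)

theorem generatingTuples_eq_preimage {f : G →* H} (hf : Surjective f)
    (hker : f.ker ≤ center G ⊓ commutator G) :
    (generatingTuples ι G : Set (ι → G)) = f.compLeft ι ⁻¹' generatingTuples ι H := by
  ext v
  change closure (Set.range v) = ⊤ ↔ closure (Set.range (f ∘ v)) = ⊤
  rw [Set.range_comp, ← MonoidHom.map_closure,
    map_eq_top_iff_of_ker_le_center_inf_commutator hf hker]

end Generation

section Counting

variable {ι G H : Type*} [Group G] [Group H]

theorem card_generatingTuples_of_ker_le [Finite ι] {f : G →* H} (hf : Surjective f)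
    (hker : f.ker ≤ center G ⊓ commutator G) :
    Nat.card (generatingTuples ι G) =
      Nat.card f.ker ^ Nat.card ι * Nat.card (generatingTuples ι H) := by
  rw [← SetLike.coe_sort_coe, generatingTuples_eq_preimage hf hker,
    (f.compLeft ι).card_preimage_of_surjective hf.comp_left, f.card_ker_compLeft]
  rfl

theorem card_commutator_of_ker_le {f : G →* H} (hf : Surjective f) (hker : f.ker ≤ commutator G) :
    Nat.card (commutator G) = Nat.card f.ker * Nat.card (commutator H) := by
  have hcomap : (commutator H).comap f = commutator G := by
    rw [commutator_def, commutator_def, ← map_top_of_surjective f hf, ← map_commutator,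
      comap_map_eq, ← commutator_def, sup_eq_left.2 hker]
  rw [← hcomap]
  exact f.card_preimage_of_surjective hf (commutator H)

variable (ι G) in
theorem card_commutator_dvd_card_generatingTuples [Finite G] [Finite ι] [Nonempty ι] :
    Nat.card (commutator G) ∣ Nat.card (generatingTuples ι G) := by
  induction hG : Nat.card G using Nat.strong_induction_on generalizing G with
  | _ m ih =>
  set N := center G ⊓ commutator G
  by_cases hN : N = ⊥
  · exact (card_dvd_card_mulAut_of_inf_center_eq_bot (by rwa [inf_comm])).trans
      (card_mulAut_dvd_card_generatingTuples ι)
  have hf := QuotientGroup.mk'_surjective N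
  have hker : (QuotientGroup.mk' N).ker = N := QuotientGroup.ker_mk' N
  have hlt : Nat.card (G ⧸ N) < m := by
    rw [← hG, card_eq_card_quotient_mul_card_subgroup N]
    exact lt_mul_of_one_lt_right Nat.card_pos ((one_lt_card_iff_ne_bot N).2 hN)
  rw [card_commutator_of_ker_le hf (hker.le.trans inf_le_right),
    card_generatingTuples_of_ker_le hf hker.le, hker]
  exact mul_dvd_mul (dvd_pow_self _ Nat.card_pos.ne') (ih _ hlt (G ⧸ N) rfl)

end Counting

theorem stmt_4 (G : Type*) [Group G] [Fintype G] (n : ℕ) (hn : 1 ≤ n) :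
    Nat.card (commutator G) ∣
      Nat.card {v : Fin n → G | Subgroup.closure (Set.range v) = ⊤} := by
  have : Nonempty (Fin n) := ⟨⟨0, hn⟩⟩
  exact card_commutator_dvd_card_generatingTuples (Fin n) G
end

section
/- Let R be a finite associative ring with unity. The number of Pythagorean triples of units, i.e., triples (x, y, z) of invertible elements of R with x² + y² = z², is divisible by the order of the group of units R*. -/
open Finset MulAction

/-- If a finset is closed under right multiplication by a subgroup, its cardinality is
divisible by the order of the subgroup. -/
lemma aux_coset {G : Type*} [Group G] [Fintype G] (H : Subgroup G)
    (A : Finset G) (hA : ∀ a ∈ A, ∀ h : H, a * (h : G) ∈ A) :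
    Nat.card H ∣ A.card := by
  classical
  rw [Nat.card_eq_fintype_card]
  letI : Fintype (G ⧸ H) := Fintype.ofFinite _
  have hsplit : A.card = ∑ q ∈ (Finset.univ : Finset (G ⧸ H)),
      (A.filter fun b => (QuotientGroup.mk b : G ⧸ H) = q).card :=
    Finset.card_eq_sum_card_fiberwise fun a _ => Finset.mem_univ _
  rw [hsplit]
  apply Finset.dvd_sum
  intro q _
  rcases (A.filter fun b => (QuotientGroup.mk b : G ⧸ H) = q).eq_empty_or_nonempty with
    he | ⟨a, ha⟩
  · simp [he]
  · rw [Finset.mem_filter] at ha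
    have : (A.filter fun b => (QuotientGroup.mk b : G ⧸ H) = q).card = Fintype.card H := by
      rw [Fintype.card, eq_comm]
      refine Finset.card_bij (fun h _ => a * (h : G)) ?_ ?_ ?_
      · intro h _
        rw [Finset.mem_filter]
        exact ⟨hA a ha.1 h, by rw [QuotientGroup.mk_mul_of_mem a h.2, ha.2]⟩
      · intro h₁ _ h₂ _ e
        exact Subtype.ext (mul_left_cancel e)
      · intro b hb
        rw [Finset.mem_filter] at hb
        have hmem : a⁻¹ * b ∈ H := QuotientGroup.eq.mp (ha.2.trans hb.2.symm)
        exact ⟨⟨a⁻¹ * b, hmem⟩, Finset.mem_univ _, by group⟩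
    rw [this]

/-- Orbit-sum lemma: if `N` is constant on orbits and each value is divisible by the
corresponding stabilizer order, then the total sum is divisible by the group order. -/
lemma aux_orbit {G P : Type*} [Group G] [Fintype G] [Fintype P] [MulAction G P]
    (N : P → ℕ)
    (hinv : ∀ (u : G) (p : P), N (u • p) = N p)
    (hstab : ∀ p : P, Nat.card (MulAction.stabilizer G p) ∣ N p) :
    Fintype.card G ∣ ∑ p : P, N p := by
  classical
  letI : Fintype (Quotient (MulAction.orbitRel G P)) := Fintype.ofFinite _
  rw [← Finset.sum_fiberwise Finset.univ
    (fun p => (⟦p⟧ : Quotient (MulAction.orbitRel G P))) N]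
  apply Finset.dvd_sum
  intro q _
  have hconst : ∀ p ∈ Finset.univ.filter
      (fun p => (⟦p⟧ : Quotient (MulAction.orbitRel G P)) = q), N p = N q.out := by
    intro p hp
    rw [Finset.mem_filter] at hp
    have h2 : (⟦p⟧ : Quotient (MulAction.orbitRel G P)) = ⟦q.out⟧ := by
      rw [hp.2, Quotient.out_eq]
    obtain ⟨u, hu⟩ := MulAction.orbitRel_apply.mp (Quotient.eq.mp h2)
    rw [← hu, hinv]
  rw [Finset.sum_const_nat hconst]
  letI : Fintype (MulAction.orbit G q.out) := Fintype.ofFinite _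
  letI : Fintype (MulAction.stabilizer G q.out) := Fintype.ofFinite _
  have hcard : (Finset.univ.filter
      (fun p => (⟦p⟧ : Quotient (MulAction.orbitRel G P)) = q)).card
      = Fintype.card (MulAction.orbit G q.out) := by
    rw [← Set.toFinset_card]
    congr 1
    ext p
    simp only [Set.mem_toFinset, Finset.mem_filter, Finset.mem_univ, true_and]
    rw [← MulAction.orbitRel_apply (G := G), ← Quotient.eq (r := MulAction.orbitRel G P),
      Quotient.out_eq]
  rw [hcard]
  obtain ⟨k, hk⟩ := hstab q.out
  rw [Nat.card_eq_fintype_card] at hk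
  rw [hk, ← MulAction.card_orbit_mul_card_stabilizer_eq_card_group G q.out]
  exact ⟨k, by ring⟩

section Main

variable {R : Type*} [Ring R]

/-- The linear condition equivalent to being a Pythagorean triple after the
substitution `y = x*m`, `z = x*n`. -/
def lin (p : Rˣ × Rˣ) (x : Rˣ) : Prop :=
  (x : R) + (p.1 : R) * x * p.1 = (p.2 : R) * x * p.2

lemma sigma_eq_helper {p q : Rˣ × Rˣ} (h : p = q) (x : Rˣ) (hx : lin p x)
    (hx' : lin q x) :
    (⟨p, ⟨x, hx⟩⟩ : Σ p : Rˣ × Rˣ, {x : Rˣ // lin p x}) = ⟨q, ⟨x, hx'⟩⟩ := by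
  subst h; rfl

lemma key_iff (x m n : Rˣ) :
    ((x : R)) ^ 2 + ((x * m : Rˣ) : R) ^ 2 = ((x * n : Rˣ) : R) ^ 2 ↔ lin (m, n) x := by
  have lhs : ((x : R)) ^ 2 + ((x * m : Rˣ) : R) ^ 2
      = (x : R) * ((x : R) + (m : R) * x * m) := by
    simp [pow_two, Units.val_mul, mul_add, mul_assoc]
  have rhs : ((x * n : Rˣ) : R) ^ 2 = (x : R) * ((n : R) * x * n) := by
    simp [pow_two, Units.val_mul, mul_assoc]
  rw [lhs, rhs, Units.mul_right_inj]
  rfl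

lemma conj_lin_iff (u : ConjAct Rˣ) (p : Rˣ × Rˣ) (x : Rˣ) :
    lin (u • p) (u • x) ↔ lin p x := by
  have hval : ∀ w : Rˣ, ((u • w : Rˣ) : R) = u • (w : R) := fun w => rfl
  simp only [lin, Prod.smul_fst, Prod.smul_snd, hval]
  rw [← smul_mul', ← smul_mul', ← smul_mul', ← smul_mul', ← smul_add]
  exact smul_left_cancel_iff u

lemma lin_mul_right {p : Rˣ × Rˣ} {x : Rˣ} (v : Rˣ)
    (hm : (v : R) * p.1 = (p.1 : R) * v) (hn : (v : R) * p.2 = (p.2 : R) * v)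
    (hx : lin p x) : lin p (x * v) := by
  obtain ⟨m, n⟩ := p
  simp only [lin] at hx ⊢
  have e : ∀ m : R, (v : R) * m = m * v →
      m * ((x : R) * v) * m = (m * x * m) * v := by
    intro m hm
    rw [← mul_assoc m (x : R) (v : R), mul_assoc ((m : R) * x) (v : R) m, hm,
      ← mul_assoc]
  push_cast
  calc (x : R) * v + (m : R) * ((x : R) * v) * m
      = ((x : R) + (m : R) * x * m) * v := by rw [e (m : R) hm, add_mul]
    _ = ((n : R) * x * n) * v := by rw [hx]
    _ = (n : R) * ((x : R) * v) * n := (e (n : R) hn).symm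

end Main

theorem stmt_6 (R : Type*) [Ring R] [Fintype R] :
    Nat.card Rˣ ∣
      Nat.card {t : Rˣ × Rˣ × Rˣ | (t.1 : R) ^ 2 + (t.2.1 : R) ^ 2 = (t.2.2 : R) ^ 2} := by
  classical
  have E : {t : Rˣ × Rˣ × Rˣ | (t.1 : R) ^ 2 + (t.2.1 : R) ^ 2 = (t.2.2 : R) ^ 2}
      ≃ Σ p : Rˣ × Rˣ, {x : Rˣ // lin p x} := by
    refine
      { toFun := fun t => ⟨(t.1.1⁻¹ * t.1.2.1, t.1.1⁻¹ * t.1.2.2), ⟨t.1.1, ?_⟩⟩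
        invFun := fun s => ⟨(s.2.1, s.2.1 * s.1.1, s.2.1 * s.1.2), ?_⟩
        left_inv := ?_
        right_inv := ?_ }
    · obtain ⟨⟨x, y, z⟩, ht⟩ := t
      rw [← key_iff x (x⁻¹ * y) (x⁻¹ * z)]
      simpa [mul_inv_cancel_left] using ht
    · obtain ⟨⟨m, n⟩, ⟨x, hx⟩⟩ := s
      exact (key_iff x m n).mpr hx
    · rintro ⟨⟨x, y, z⟩, ht⟩
      simp [mul_inv_cancel_left]
    · rintro ⟨⟨m, n⟩, ⟨x, hx⟩⟩
      exact sigma_eq_helper (by simp) x _ hx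
  set N : Rˣ × Rˣ → ℕ := fun p => Fintype.card {x : Rˣ // lin p x} with hN
  have hinv : ∀ (u : ConjAct Rˣ) (p : Rˣ × Rˣ), N (u • p) = N p := by
    intro u p
    exact Fintype.card_congr
      ((Equiv.subtypeEquiv (MulAction.toPerm u) fun x => (conj_lin_iff u p x).symm).symm)
  have hstab : ∀ p : Rˣ × Rˣ,
      Nat.card (MulAction.stabilizer (ConjAct Rˣ) p) ∣ N p := by
    intro p
    set H : Subgroup Rˣ :=
      (MulAction.stabilizer (ConjAct Rˣ) p).map ConjAct.ofConjAct.toMonoidHom with hH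
    have hcard : Nat.card (MulAction.stabilizer (ConjAct Rˣ) p) = Nat.card H :=
      Nat.card_congr
        ((MulAction.stabilizer (ConjAct Rˣ) p).equivMapOfInjective _
          (MulEquiv.injective _)).toEquiv
    have hNA : N p = (Finset.univ.filter fun x : Rˣ => lin p x).card :=
      Fintype.card_subtype (fun x : Rˣ => lin p x)
    rw [hcard, hNA]
    apply aux_coset
    intro a ha h
    simp only [Finset.mem_filter, Finset.mem_univ, true_and] at ha ⊢
    obtain ⟨u, hu, huh⟩ := Subgroup.mem_map.mp h.2
    have hu1 : ConjAct.ofConjAct u * p.1 * (ConjAct.ofConjAct u)⁻¹ = p.1 := by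
      have := congrArg Prod.fst hu
      rwa [Prod.smul_fst, ConjAct.smul_def] at this
    have hu2 : ConjAct.ofConjAct u * p.2 * (ConjAct.ofConjAct u)⁻¹ = p.2 := by
      have := congrArg Prod.snd hu
      rwa [Prod.smul_snd, ConjAct.smul_def] at this
    have hm : ((h : Rˣ) : R) * p.1 = (p.1 : R) * (h : Rˣ) := by
      have : ConjAct.ofConjAct u * p.1 = p.1 * ConjAct.ofConjAct u := by
        rw [← mul_inv_eq_iff_eq_mul]; exact hu1
      rw [← huh]
      exact_mod_cast congrArg (Units.val) this
    have hn : ((h : Rˣ) : R) * p.2 = (p.2 : R) * (h : Rˣ) := by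
      have : ConjAct.ofConjAct u * p.2 = p.2 * ConjAct.ofConjAct u := by
        rw [← mul_inv_eq_iff_eq_mul]; exact hu2
      rw [← huh]
      exact_mod_cast congrArg (Units.val) this
    exact lin_mul_right _ hm hn ha
  have hG : Nat.card Rˣ = Fintype.card (ConjAct Rˣ) := by
    rw [Nat.card_eq_fintype_card]
    exact ConjAct.card.symm
  rw [Nat.card_congr E, hG, Nat.card_eq_fintype_card, Fintype.card_sigma]
  exact aux_orbit N hinv hstab
end

section
/- Let G be a finite group, H ≤ G a subgroup, and g₀ ∈ G. The number of pairs (x, y) ∈ G² such that the commutator [x, y] lies in the double coset H·g₀·H is divisible by |H|. -/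
open MulAction Finset

/-- If a finset of `G` is closed under left multiplication by the (injective) image of a
finite group `K`, then `|K|` divides its cardinality. -/
private lemma coset_dvd {K G : Type*} [Group K] [Fintype K] [Group G] [Fintype G]
    (φ : K →* G) (hφ : Function.Injective φ) (A : Finset G)
    (hA : ∀ (k : K), ∀ a ∈ A, φ k * a ∈ A) : Nat.card K ∣ A.card := by
  classical
  rw [Finset.card_eq_sum_card_image (fun y => ((y⁻¹ : G) : G ⧸ φ.range)) A]
  refine Finset.dvd_sum ?_
  intro q hq
  obtain ⟨z, hz, hzq⟩ := Finset.mem_image.mp hq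
  have key : (A.filter fun y => ((y⁻¹ : G) : G ⧸ φ.range) = q).card = Nat.card K := by
    rw [Nat.card_eq_fintype_card, ← Finset.card_univ]
    refine (Finset.card_bij (fun (k : K) _ => φ k * z) ?_ ?_ ?_).symm
    · intro k _
      refine Finset.mem_filter.mpr ⟨hA k z hz, ?_⟩
      rw [← hzq, QuotientGroup.eq]
      refine ⟨k, ?_⟩
      simp [mul_assoc]
    · intro k₁ _ k₂ _ h
      exact hφ (mul_right_cancel h)
    · intro b hb
      obtain ⟨hbA, hbq⟩ := Finset.mem_filter.mp hb
      rw [← hzq, QuotientGroup.eq] at hbq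
      obtain ⟨k, hk⟩ := hbq
      have hk' : φ k = b * z⁻¹ := by simpa using hk
      exact ⟨k, Finset.mem_univ _, by show φ k * z = b; rw [hk']; group⟩
  rw [key]

/-- Orbit-sum divisibility: if `f : X → ℕ` is constant on orbits of a finite group `A`
and each value is divisible by the cardinality of the corresponding stabilizer, then
`|A|` divides `∑ f`. -/
private lemma orbit_sum {A : Type*} [Group A] [Fintype A] {X : Type*} [Fintype X]
    [MulAction A X] (f : X → ℕ)
    (hconst : ∀ (a : A) (x : X), f (a • x) = f x)
    (hdvd : ∀ x : X, Nat.card (stabilizer A x) ∣ f x) :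
    Nat.card A ∣ ∑ x : X, f x := by
  classical
  letI : Fintype (orbitRel.Quotient A X) := Fintype.ofFinite _
  rw [← Finset.sum_fiberwise Finset.univ
      (fun x => (Quotient.mk (orbitRel A X) x : orbitRel.Quotient A X)) f]
  refine Finset.dvd_sum fun ω _ => ?_
  set z := Quotient.out (ω : Quotient (orbitRel A X)) with hz
  have hmem : ∀ x : X, ((Quotient.mk (orbitRel A X) x : orbitRel.Quotient A X) = ω)
      ↔ x ∈ orbit A z := by
    intro x
    constructor
    · intro hxx
      have hxz : (Quotient.mk (orbitRel A X) x) = Quotient.mk (orbitRel A X) z := by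
        rw [hxx, hz]
        exact (Quotient.out_eq ω).symm
      exact (orbitRel_apply).mp (Quotient.exact hxz)
    · intro hxz
      have heq2 : (Quotient.mk (orbitRel A X) x) = Quotient.mk (orbitRel A X) z :=
        Quotient.sound ((orbitRel_apply).mpr hxz)
      rw [heq2, hz]
      exact Quotient.out_eq ω
  have hconst' : ∀ x ∈ Finset.univ.filter
      (fun x => (Quotient.mk (orbitRel A X) x : orbitRel.Quotient A X) = ω), f x = f z := by
    intro x hx
    obtain ⟨a, rfl⟩ := (hmem x).mp (Finset.mem_filter.mp hx).2
    exact hconst a z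
  rw [Finset.sum_congr rfl hconst', Finset.sum_const, smul_eq_mul]
  have hcard : (Finset.univ.filter
      (fun x => (Quotient.mk (orbitRel A X) x : orbitRel.Quotient A X) = ω)).card
      = Nat.card (orbit A z) := by
    rw [Finset.filter_congr (fun x _ => by rw [hmem x])]
    rw [Nat.card_eq_fintype_card, Fintype.card_subtype]
  obtain ⟨m, hm⟩ := hdvd z
  have horb : Nat.card (orbit A z) * Nat.card (stabilizer A z) = Nat.card A := by
    simp only [Nat.card_eq_fintype_card]
    exact card_orbit_mul_card_stabilizer_eq_card_group A z
  exact ⟨m, by rw [hcard, hm, ← horb]; ring⟩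

private lemma conj_iff {G : Type*} [Group G] (H : Subgroup G) (g₀ : G) {h : G} (hh : h ∈ H)
    (x y : G) :
    (∃ h₁ ∈ H, ∃ h₂ ∈ H,
        (h*x*h⁻¹)⁻¹ * (h*y*h⁻¹)⁻¹ * (h*x*h⁻¹) * (h*y*h⁻¹) = h₁ * g₀ * h₂) ↔
    (∃ h₁ ∈ H, ∃ h₂ ∈ H, x⁻¹ * y⁻¹ * x * y = h₁ * g₀ * h₂) := by
  constructor
  · rintro ⟨h₁, hh₁, h₂, hh₂, heq⟩
    refine ⟨h⁻¹*h₁, mul_mem (inv_mem hh) hh₁, h₂*h, mul_mem hh₂ hh, ?_⟩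
    have k : x⁻¹ * y⁻¹ * x * y
        = h⁻¹ * ((h*x*h⁻¹)⁻¹ * (h*y*h⁻¹)⁻¹ * (h*x*h⁻¹) * (h*y*h⁻¹)) * h := by group
    rw [k, heq]; group
  · rintro ⟨h₁, hh₁, h₂, hh₂, heq⟩
    refine ⟨h*h₁, mul_mem hh hh₁, h₂*h⁻¹, mul_mem hh₂ (inv_mem hh), ?_⟩
    have k : (h*x*h⁻¹)⁻¹ * (h*y*h⁻¹)⁻¹ * (h*x*h⁻¹) * (h*y*h⁻¹)
        = h * (x⁻¹ * y⁻¹ * x * y) * h⁻¹ := by group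
    rw [k, heq]; group

private lemma cent_mul {G : Type*} [Group G] (H : Subgroup G) (g₀ x g y : G)
    (hg : g⁻¹ * x * g = x)
    (hy : ∃ h₁ ∈ H, ∃ h₂ ∈ H, x⁻¹ * y⁻¹ * x * y = h₁ * g₀ * h₂) :
    ∃ h₁ ∈ H, ∃ h₂ ∈ H, x⁻¹ * (g*y)⁻¹ * x * (g*y) = h₁ * g₀ * h₂ := by
  obtain ⟨h₁, hh₁, h₂, hh₂, heq⟩ := hy
  refine ⟨h₁, hh₁, h₂, hh₂, ?_⟩
  have k : x⁻¹ * (g*y)⁻¹ * x * (g*y) = x⁻¹ * y⁻¹ * (g⁻¹ * x * g) * y := by group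
  rw [k, hg, heq]

theorem stmt_14 (G : Type*) [Group G] [Fintype G] (H : Subgroup G) (g₀ : G) :
    Nat.card H ∣
      Nat.card {p : G × G |
        ∃ h₁ ∈ H, ∃ h₂ ∈ H, p.1⁻¹ * p.2⁻¹ * p.1 * p.2 = h₁ * g₀ * h₂} := by
  classical
  set P : G → G → Prop :=
    fun x y => ∃ h₁ ∈ H, ∃ h₂ ∈ H, x⁻¹ * y⁻¹ * x * y = h₁ * g₀ * h₂ with hP
  set c : G → ℕ := fun x => Nat.card {y : G // P x y} with hc
  -- the acting group: H embedded in ConjAct G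
  set A : Subgroup (ConjAct G) := H.map (ConjAct.toConjAct.toMonoidHom) with hA
  have hcardA : Nat.card A = Nat.card H :=
    (Nat.card_congr (Subgroup.equivMapOfInjective H ConjAct.toConjAct.toMonoidHom
      (ConjAct.toConjAct.injective)).toEquiv).symm
  -- c is constant on orbits
  have hc_conj : ∀ h ∈ H, ∀ x : G, c (h * x * h⁻¹) = c x := by
    intro h hh x
    apply Nat.card_congr
    refine ⟨fun y => ⟨h⁻¹ * (y : G) * h, ?_⟩, fun y => ⟨h * (y : G) * h⁻¹,
        (conj_iff H g₀ hh x (y : G)).mpr y.2⟩, ?_, ?_⟩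
    · refine (conj_iff H g₀ hh x (h⁻¹ * (y : G) * h)).mp ?_
      have e : h * (h⁻¹ * (y : G) * h) * h⁻¹ = (y : G) := by group
      rw [e]
      exact y.2
    · intro y; apply Subtype.ext; simp only []; group
    · intro y; apply Subtype.ext; simp only []; group
  have hconst : ∀ (a : A) (x : G), c (a • x) = c x := by
    intro a x
    obtain ⟨h, hh, hha⟩ := Subgroup.mem_map.mp a.2
    have hax : a • x = h * x * h⁻¹ := by
      rw [Subgroup.smul_def, ConjAct.smul_def, ← hha]
      simp
    rw [hax]
    exact hc_conj h hh x
  -- divisibility by stabilizers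
  have hdvd : ∀ x : G, Nat.card (stabilizer A x) ∣ c x := by
    intro x
    have hcx : c x = (Finset.univ.filter (P x)).card := by
      rw [hc]
      simp only []
      rw [Nat.card_eq_fintype_card, Fintype.card_subtype]
    rw [hcx]
    refine coset_dvd
      (((ConjAct.ofConjAct : ConjAct G ≃* G).toMonoidHom).comp
        ((A.subtype).comp ((stabilizer A x).subtype))) ?_ _ ?_
    · exact ((ConjAct.ofConjAct : ConjAct G ≃* G).injective).comp
        ((Subgroup.subtype_injective _).comp (Subgroup.subtype_injective _))
    · intro s y hy
      have hyP : P x y := (Finset.mem_filter.mp hy).2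
      have hmem2 : ((s : A) : ConjAct G) • x = x := by
        have h0 := MulAction.mem_stabilizer_iff.mp s.2
        rw [Subgroup.smul_def] at h0
        exact h0
      have hstab : ConjAct.ofConjAct ((s : A) : ConjAct G) * x
          * (ConjAct.ofConjAct ((s : A) : ConjAct G))⁻¹ = x := by
        rw [ConjAct.smul_def] at hmem2
        exact hmem2
      have hgx : (ConjAct.ofConjAct ((s : A) : ConjAct G))⁻¹ * x
          * ConjAct.ofConjAct ((s : A) : ConjAct G) = x := by
        have h3 : ConjAct.ofConjAct ((s : A) : ConjAct G) * x
            = x * ConjAct.ofConjAct ((s : A) : ConjAct G) := by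
          rwa [mul_inv_eq_iff_eq_mul] at hstab
        rw [mul_assoc, ← h3]
        group
      refine Finset.mem_filter.mpr ⟨Finset.mem_univ _, ?_⟩
      exact cent_mul H g₀ x _ y hgx hyP
  -- count fiberwise
  have count : Nat.card {p : G × G | P p.1 p.2} = ∑ x : G, c x := by
    have e : {p : G × G | P p.1 p.2} ≃ Σ x : G, {y : G // P x y} :=
      (Equiv.subtypeEquivRight (fun p => Iff.rfl)).trans
        (Equiv.subtypeProdEquivSigmaSubtype P)
    rw [Nat.card_congr e, Nat.card_eq_fintype_card, Fintype.card_sigma]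
    exact Finset.sum_congr rfl (fun x _ => (Nat.card_eq_fintype_card).symm)
  show Nat.card H ∣ Nat.card {p : G × G | P p.1 p.2}
  rw [count, ← hcardA]
  exact orbit_sum c hconst hdvd
end

section
/- Let G be a finite group and A ≤ G a subgroup, and let n be a positive integer. The number of n-tuples (g₁, …, gₙ) ∈ Gⁿ such that the subgroup generated by g₁, …, gₙ equals A is divisible by the order of the commutator subgroup of A. -/
open Subgroup Function Set

universe u

/-- A free action of a group on a finite type gives divisibility of cardinalities. -/
private lemma card_dvd_of_free_action {K X : Type*} [Group K] [MulAction K X] [Finite X]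
    (hfree : ∀ (k : K) (x : X), k • x = x → k = 1) :
    Nat.card K ∣ Nat.card X := by
  have orb : ∀ b : X, K ≃ MulAction.orbit K b := by
    intro b
    refine Equiv.ofBijective (fun k : K => ⟨k • b, MulAction.mem_orbit b k⟩) ⟨?_, ?_⟩
    · intro k k' hk
      simp only [Subtype.mk.injEq] at hk
      have h1 : (k'⁻¹ * k) • b = b := by rw [mul_smul, hk, inv_smul_smul]
      have h2 := hfree _ _ h1
      rwa [inv_mul_eq_one, eq_comm] at h2
    · rintro ⟨y, k, rfl⟩; exact ⟨k, rfl⟩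
  have e : X ≃ (MulAction.orbitRel.Quotient K X) × K :=
    (MulAction.selfEquivSigmaOrbits K X).trans
      ((Equiv.sigmaCongrRight (fun ω => (orb _).symm)).trans (Equiv.sigmaEquivProd _ _))
  rw [Nat.card_congr e, Nat.card_prod]
  exact dvd_mul_left _ _

private lemma normal_of_le_center {H : Type*} [Group H] {N : Subgroup H}
    (hN : N ≤ Subgroup.center H) : N.Normal := by
  refine ⟨fun x hx g => ?_⟩
  have hc := Subgroup.mem_center_iff.mp (hN hx) g
  rw [hc, mul_assoc, mul_inv_cancel, mul_one]
  exact hx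

private lemma commutator_inf_center_eq_bot {H : Type*} [Group H]
    (hf : frattini H = ⊥) : commutator H ⊓ Subgroup.center H = ⊥ := by
  by_contra hne
  set N := commutator H ⊓ Subgroup.center H with hNdef
  have hNc : N ≤ Subgroup.center H := inf_le_right
  haveI hNn : N.Normal := normal_of_le_center hNc
  have hNle : ¬ N ≤ frattini H := by
    rw [hf]; exact fun hle => hne (le_bot_iff.mp hle)
  obtain ⟨M, hM, hNM⟩ : ∃ M : Subgroup H, IsCoatom M ∧ ¬ N ≤ M := by
    by_contra hc
    push_neg at hc
    exact hNle (le_iInf₂ fun M hM => hc M hM)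
  have hMN : M ⊔ N = ⊤ := by
    refine hM.2 _ (lt_of_le_of_ne le_sup_left fun h => hNM ?_)
    rw [h]; exact le_sup_right
  have hdecomp : ∀ g : H, ∃ m ∈ M, ∃ z ∈ N, m * z = g := by
    intro g
    have hg : g ∈ ((M ⊔ N : Subgroup H) : Set H) := by rw [hMN]; trivial
    rw [Subgroup.mul_normal] at hg
    obtain ⟨m, hm, z, hz, hmz⟩ := hg
    exact ⟨m, hm, z, hz, hmz⟩
  haveI hMn : M.Normal := by
    refine ⟨fun x hx g => ?_⟩
    obtain ⟨m, hm, z, hz, rfl⟩ := hdecomp g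
    have hx' : z * x = x * z := (Subgroup.mem_center_iff.mp (hNc hz) x).symm
    have key : (m * z) * x * (m * z)⁻¹ = m * x * m⁻¹ := by
      calc (m * z) * x * (m * z)⁻¹ = m * (z * x) * z⁻¹ * m⁻¹ := by group
        _ = m * (x * z) * z⁻¹ * m⁻¹ := by rw [hx']
        _ = m * x * m⁻¹ := by group
    rw [key]
    exact M.mul_mem (M.mul_mem hm hx) (M.inv_mem hm)
  have hsurj : ∀ q : H ⧸ M, ∃ z, z ∈ Subgroup.center H ∧ (QuotientGroup.mk z : H ⧸ M) = q := by
    intro q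
    obtain ⟨g, rfl⟩ := QuotientGroup.mk_surjective q
    obtain ⟨m, hm, z, hz, rfl⟩ := hdecomp g
    refine ⟨z, hNc hz, ?_⟩
    rw [QuotientGroup.mk_mul, (QuotientGroup.eq_one_iff m).mpr hm, one_mul]
  letI : CommGroup (H ⧸ M) := {
    (inferInstance : Group (H ⧸ M)) with
    mul_comm := fun a b => by
      obtain ⟨z, hz, rfl⟩ := hsurj a
      obtain ⟨z', hz', rfl⟩ := hsurj b
      rw [← QuotientGroup.mk_mul, ← QuotientGroup.mk_mul,
        Subgroup.mem_center_iff.mp hz' z] }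
  have hcm : commutator H ≤ M := by
    have := Abelianization.commutator_subset_ker (QuotientGroup.mk' M)
    rwa [QuotientGroup.ker_mk'] at this
  exact hNM (le_trans inf_le_left hcm)

/-- Preimage of a point under a surjective hom is equivalent to the kernel. -/
private noncomputable def kerFiberEquiv {H Q : Type u} [Group H] [Group Q] (π : H →* Q)
    (hs : Function.Surjective π) (y : Q) : {x : H // π x = y} ≃ π.ker := by
  have h₀ : π (hs y).choose = y := (hs y).choose_spec
  refine ⟨fun x => ⟨(hs y).choose⁻¹ * x.1, ?_⟩, fun k => ⟨(hs y).choose * k.1, ?_⟩, ?_, ?_⟩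
  · rw [MonoidHom.mem_ker, map_mul, map_inv, h₀, x.2, inv_mul_cancel]
  · rw [map_mul, h₀, MonoidHom.mem_ker.mp k.2, mul_one]
  · intro x; apply Subtype.ext; simp
  · intro k; apply Subtype.ext; simp

private lemma frattini_lift {H : Type u} [Group H] [Finite H] {n : ℕ} (w : Fin n → H)
    (h : Subgroup.closure (Set.range ((QuotientGroup.mk' (frattini H)) ∘ w)) = ⊤) :
    Subgroup.closure (Set.range w) = ⊤ := by
  set π := QuotientGroup.mk' (frattini H)
  have h1 : Subgroup.map π (Subgroup.closure (Set.range w)) = ⊤ := by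
    rw [MonoidHom.map_closure, ← Set.range_comp, h]
  have h2 := congrArg (Subgroup.comap π) h1
  rw [Subgroup.comap_map_eq, Subgroup.comap_top, QuotientGroup.ker_mk'] at h2
  exact frattini_nongenerating h2

private lemma card_gen_eq {H : Type u} [Group H] [Finite H] (n : ℕ) :
    Nat.card {w : Fin n → H | Subgroup.closure (Set.range w) = ⊤}
      = Nat.card {q : Fin n → H ⧸ frattini H | Subgroup.closure (Set.range q) = ⊤}
        * Nat.card (frattini H) ^ n := by
  set π := QuotientGroup.mk' (frattini H) with hπ
  have hsurj : Function.Surjective ⇑π := QuotientGroup.mk'_surjective _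
  set TH := {w : Fin n → H | Subgroup.closure (Set.range w) = ⊤} with hTH
  set TQ := {q : Fin n → H ⧸ frattini H | Subgroup.closure (Set.range q) = ⊤} with hTQ
  have hmem : ∀ w : Fin n → H, w ∈ TH → (⇑π ∘ w) ∈ TQ := by
    intro w hw
    show Subgroup.closure (Set.range (⇑π ∘ w)) = ⊤
    rw [Set.range_comp, ← MonoidHom.map_closure, hw]
    exact Subgroup.map_top_of_surjective π hsurj
  let f : TH → TQ := fun w => ⟨⇑π ∘ w.1, hmem w.1 w.2⟩
  have e2 : ∀ q : TQ, {w : TH // f w = q} ≃ (Fin n → π.ker) := by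
    intro q
    refine Equiv.trans (⟨fun w => ⟨w.1.1, congrArg Subtype.val w.2⟩,
      fun v => ⟨⟨v.1, frattini_lift v.1 (by rw [v.2]; exact q.2)⟩, Subtype.ext v.2⟩,
      fun w => by apply Subtype.ext; apply Subtype.ext; rfl,
      fun v => by apply Subtype.ext; rfl⟩ :
        {w : TH // f w = q} ≃ {v : Fin n → H // ⇑π ∘ v = q.1}) ?_
    exact Equiv.trans
      (Equiv.subtypeEquivRight (q := fun v : Fin n → H => ∀ i, π (v i) = q.1 i)
        fun v => by simp [funext_iff, Function.comp])
      (Equiv.trans (Equiv.subtypePiEquivPi (p := fun (i : Fin n) (x : H) => π x = q.1 i))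
        (Equiv.piCongrRight fun i => kerFiberEquiv π hsurj (q.1 i)))
  have e : TH ≃ TQ × (Fin n → π.ker) :=
    ((Equiv.sigmaFiberEquiv f).symm.trans (Equiv.sigmaCongrRight e2)).trans
      (Equiv.sigmaEquivProd _ _)
  rw [Nat.card_congr e, Nat.card_prod, Nat.card_fun, Nat.card_eq_fintype_card (α := Fin n),
    Fintype.card_fin]
  congr 2
  rw [hπ, QuotientGroup.ker_mk']

private lemma closure_conj {H : Type u} [Group H] {n : ℕ} (w : Fin n → H)
    (h : Subgroup.closure (Set.range w) = ⊤) (a : H) :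
    Subgroup.closure (Set.range (fun i => a * w i * a⁻¹)) = ⊤ := by
  have hc : (fun i => a * w i * a⁻¹) = ⇑(MulAut.conj a).toMonoidHom ∘ w := by
    funext i; simp
  rw [hc, Set.range_comp, ← MonoidHom.map_closure, h]
  exact Subgroup.map_top_of_surjective _ (MulAut.conj a).surjective

private lemma case_frattini_bot {H : Type u} [Group H] [Finite H] (n : ℕ)
    (hf : frattini H = ⊥) :
    Nat.card (commutator H) ∣
      Nat.card {w : Fin n → H | Subgroup.closure (Set.range w) = ⊤} := by
  have hZ : commutator H ⊓ Subgroup.center H = ⊥ := commutator_inf_center_eq_bot hf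
  set X := {w : Fin n → H | Subgroup.closure (Set.range w) = ⊤} with hX
  letI : MulAction (commutator H) ↑X :=
    { smul := fun a w => ⟨fun i => a.1 * w.1 i * a.1⁻¹, closure_conj w.1 w.2 a.1⟩
      one_smul := fun w => by
        apply Subtype.ext; funext i
        show ((1 : commutator H) : H) * w.1 i * ((1 : commutator H) : H)⁻¹ = w.1 i
        simp
      mul_smul := fun a b w => by
        apply Subtype.ext; funext i
        show (↑(a * b) : H) * w.1 i * (↑(a * b) : H)⁻¹ = a.1 * (b.1 * w.1 i * b.1⁻¹) * a.1⁻¹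
        simp [mul_assoc] }
  refine card_dvd_of_free_action ?_
  intro k x hkx
  have hcomm : ∀ i, k.1 * x.1 i * k.1⁻¹ = x.1 i := by
    intro i
    exact congrFun (congrArg Subtype.val hkx) i
  have hcent : (k : H) ∈ Subgroup.center H := by
    have hsub : Set.range x.1 ⊆ ↑(Subgroup.centralizer {(k : H)}) := by
      rintro - ⟨i, rfl⟩
      rw [SetLike.mem_coe, Subgroup.mem_centralizer_iff]
      rintro h hh
      rw [Set.mem_singleton_iff] at hh
      subst hh
      calc k.1 * x.1 i = (k.1 * x.1 i * k.1⁻¹) * k.1 := by group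
        _ = x.1 i * k.1 := by rw [hcomm i]
    have htop : Subgroup.centralizer {(k : H)} = ⊤ :=
      top_le_iff.mp (x.2 ▸ (Subgroup.closure_le _).mpr hsub)
    have := Subgroup.centralizer_eq_top_iff_subset.mp htop
    exact this rfl
  have : (k : H) ∈ commutator H ⊓ Subgroup.center H := ⟨k.2, hcent⟩
  rw [hZ] at this
  exact Subtype.ext this

private lemma closure_lift_top {G : Type u} [Group G] (A : Subgroup G) {n : ℕ}
    (w : Fin n → A) :
    Subgroup.closure (Set.range fun i => (w i : G)) = A ↔
      Subgroup.closure (Set.range w) = ⊤ := by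
  have hmap : Subgroup.map A.subtype (Subgroup.closure (Set.range w))
      = Subgroup.closure (Set.range fun i => (w i : G)) := by
    rw [MonoidHom.map_closure, ← Set.range_comp]; rfl
  have htop : Subgroup.map A.subtype ⊤ = A := by
    rw [← MonoidHom.range_eq_map, Subgroup.range_subtype]
  constructor
  · intro h
    apply Subgroup.map_injective A.subtype_injective
    rw [hmap, h, htop]
  · intro h
    rw [← hmap, h, htop]

private lemma aux_main : ∀ (N : ℕ) (H : Type u) [Group H] [Finite H], Nat.card H ≤ N →
    ∀ n : ℕ, 1 ≤ n →
    Nat.card (commutator H) ∣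
      Nat.card {w : Fin n → H | Subgroup.closure (Set.range w) = ⊤} := by
  intro N
  induction N with
  | zero =>
    intro H _ _ hle
    have : 0 < Nat.card H := Nat.card_pos
    omega
  | succ N ih =>
    intro H _ _ hcard n hn
    by_cases hfrat : frattini H = ⊥
    · exact case_frattini_bot n hfrat
    · set Q := H ⧸ frattini H with hQdef
      have hQcard : Nat.card Q ≤ N := by
        have h1 : Nat.card H = Nat.card Q * Nat.card (frattini H) :=
          Subgroup.card_eq_card_quotient_mul_card_subgroup _
        have h2 : 1 < Nat.card (frattini H) :=
          (Subgroup.one_lt_card_iff_ne_bot _).mpr hfrat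
        have h3 : 0 < Nat.card Q := Nat.card_pos
        nlinarith
      have IH := ih Q hQcard n hn
      set π := QuotientGroup.mk' (frattini H) with hπ
      have hsurj : Function.Surjective ⇑π := QuotientGroup.mk'_surjective _
      set f : commutator H →* Q := π.comp (commutator H).subtype with hf
      have hrange : f.range = commutator Q := by
        rw [hf, MonoidHom.range_comp, Subgroup.range_subtype, _root_.commutator_def,
          Subgroup.map_commutator, Subgroup.map_top_of_surjective _ hsurj,
          ← _root_.commutator_def]
      have hcount : Nat.card (commutator H) = Nat.card (commutator Q) * Nat.card f.ker := by
        rw [Subgroup.card_eq_card_quotient_mul_card_subgroup f.ker]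
        congr 1
        rw [Nat.card_congr (QuotientGroup.quotientKerEquivRange f).toEquiv, hrange]
      have hker : Nat.card f.ker ∣ Nat.card (frattini H) := by
        refine Subgroup.card_dvd_of_injective
          (⟨⟨fun x => ⟨x.1.1, by
              have hx : π x.1.1 = 1 := MonoidHom.mem_ker.mp x.2
              have h2 : x.1.1 ∈ π.ker := MonoidHom.mem_ker.mpr hx
              rwa [hπ, QuotientGroup.ker_mk'] at h2⟩,
            rfl⟩, fun x y => rfl⟩ : f.ker →* frattini H) ?_
        intro x y hxy
        have h1 := Subtype.ext_iff.mp hxy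
        exact Subtype.ext (Subtype.ext h1)
      rw [hcount, card_gen_eq n]
      exact mul_dvd_mul IH (hker.trans (dvd_pow_self _ (by omega)))

section Final

theorem stmt_15 (G : Type*) [Group G] [Fintype G] (A : Subgroup G) (n : ℕ) (hn : 1 ≤ n) :
    Nat.card (commutator A) ∣
      Nat.card {v : Fin n → G | Subgroup.closure (Set.range v) = A} := by
  have hmem : ∀ v : {v : Fin n → G | Subgroup.closure (Set.range v) = A},
      ∀ i : Fin n, v.1 i ∈ A := by
    rintro ⟨v, hv⟩ i
    have hv' : Subgroup.closure (Set.range v) = A := hv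
    have h2 : v i ∈ Subgroup.closure (Set.range v) :=
      Subgroup.subset_closure ⟨i, rfl⟩
    rwa [hv'] at h2
  have e : {v : Fin n → G | Subgroup.closure (Set.range v) = A} ≃
      {w : Fin n → A | Subgroup.closure (Set.range w) = ⊤} := by
    refine ⟨fun v => ⟨fun i => ⟨v.1 i, hmem v i⟩, ?_⟩,
      fun w => ⟨fun i => (w.1 i : G), ?_⟩, ?_, ?_⟩
    · exact (closure_lift_top A _).mp v.2
    · exact (closure_lift_top A _).mpr w.2
    · intro v; apply Subtype.ext; funext i; rfl
    · intro w; apply Subtype.ext; funext i; apply Subtype.ext; rfl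
  rw [Nat.card_congr e]
  exact aux_main (Nat.card A) ↥A le_rfl n hn

end Final
end

section
/- Let R be a finite associative ring with unity and let c ∈ R. The number of pairs of units (x, y) of R satisfying x·y = c·y·x in R is divisible by the order of the centralizer of c within the unit group, i.e., by |{u ∈ R* : u·c = c·u}|. -/
open MulAction

private lemma nat_card_sigma' {ι : Type*} [Fintype ι] (X : ι → Type*) [∀ i, Finite (X i)] :
    Nat.card (Σ i, X i) = ∑ i, Nat.card (X i) := by
  letI := fun i => Fintype.ofFinite (X i)
  simp only [Nat.card_eq_fintype_card, Fintype.card_sigma]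

private lemma conj_card_eq {G : Type*} [Group G] (c v y : G) (hv : v * c = c * v) :
    Nat.card {x : G // x * y = c * y * x} =
      Nat.card {x : G // x * (v * y * v⁻¹) = c * (v * y * v⁻¹) * x} := by
  refine Nat.card_congr (Equiv.subtypeEquiv (MulAut.conj v).toEquiv fun x => ?_)
  simp only [MulEquiv.toEquiv_eq_coe, EquivLike.coe_coe, MulAut.conj_apply]
  have h1 : v * x * v⁻¹ * (v * y * v⁻¹) = v * (x * y) * v⁻¹ := by group
  have h2 : c * (v * y * v⁻¹) * (v * x * v⁻¹) = v * (c * y * x) * v⁻¹ := by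
    calc c * (v * y * v⁻¹) * (v * x * v⁻¹) = c * v * (y * x) * v⁻¹ := by group
      _ = v * c * (y * x) * v⁻¹ := by rw [hv]
      _ = v * (c * y * x) * v⁻¹ := by group
  rw [h1, h2]
  constructor
  · intro h; rw [h]
  · intro h
    exact mul_left_cancel (mul_right_cancel h)

private lemma key {G : Type*} [Group G] [Finite G] (c : G) :
    Nat.card {u : G // u * c = c * u} ∣
      Nat.card {p : G × G // p.1 * p.2 = c * p.2 * p.1} := by
  classical
  letI : Fintype G := Fintype.ofFinite G
  set C : Subgroup (ConjAct G) := Subgroup.centralizer {ConjAct.toConjAct c} with hC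
  have hCcard : Nat.card {u : G // u * c = c * u} = Nat.card C := by
    refine Nat.card_congr (Equiv.subtypeEquiv (ConjAct.toConjAct (G := G)).toEquiv fun u => ?_)
    simp only [MulEquiv.toEquiv_eq_coe, EquivLike.coe_coe, hC, Subgroup.mem_centralizer_iff,
      Set.mem_singleton_iff, forall_eq, ← map_mul, (ConjAct.toConjAct (G := G)).injective.eq_iff]
    exact eq_comm
  have e1 : {p : G × G // p.1 * p.2 = c * p.2 * p.1} ≃ Σ y : G, {x : G // x * y = c * y * x} :=
    ⟨fun p => ⟨p.1.2, p.1.1, p.2⟩, fun q => ⟨(q.2.1, q.1), q.2.2⟩, fun p => rfl, fun q => rfl⟩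
  rw [hCcard, Nat.card_congr e1, nat_card_sigma']
  rw [← Fintype.sum_fiberwise (Quotient.mk (orbitRel C G))
      (fun y => Nat.card {x : G // x * y = c * y * x})]
  refine Finset.dvd_sum fun ω _ => ?_
  set y₀ : G := ω.out with hy₀
  -- every member of the fiber is conjugate to y₀ by an element commuting with c
  have hconst : ∀ y : G, Quotient.mk (orbitRel C G) y = ω →
      Nat.card {x : G // x * y = c * y * x} =
        Nat.card {x : G // x * y₀ = c * y₀ * x} := by
    intro y hy
    have : y ∈ orbit C y₀ := by
      rw [← MulAction.orbitRel_apply (G := C)]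
      exact Quotient.exact (by rw [hy, hy₀, Quotient.out_eq])
    obtain ⟨u, hu⟩ := this
    have hvc : ConjAct.ofConjAct (u : ConjAct G) * c = c * ConjAct.ofConjAct (u : ConjAct G) := by
      have h' := (Subgroup.mem_centralizer_iff.mp u.2) (ConjAct.toConjAct c) (Set.mem_singleton _)
      have h'' := congrArg ConjAct.ofConjAct h'
      simpa [map_mul] using h''.symm
    have hy' : y = ConjAct.ofConjAct (u : ConjAct G) * y₀ * (ConjAct.ofConjAct (u : ConjAct G))⁻¹ := by
      rw [← hu]; rfl
    rw [hy']
    exact (conj_card_eq c _ y₀ hvc).symm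
  rw [Finset.sum_congr rfl fun y _ => hconst y.1 y.2, Finset.sum_const, Finset.card_univ, smul_eq_mul]
  -- the fiber has the same cardinality as the orbit of y₀ under C
  have hfiber : Fintype.card {y : G // Quotient.mk (orbitRel C G) y = ω}
      = Nat.card (orbit C y₀) := by
    rw [Nat.card_eq_fintype_card]
    refine Fintype.card_congr (Equiv.subtypeEquivRight fun y => ?_)
    constructor
    · intro hy
      rw [← MulAction.orbitRel_apply (G := C)]
      exact Quotient.exact (by rw [hy, hy₀, Quotient.out_eq])
    · intro hy
      rw [← MulAction.orbitRel_apply (G := C)] at hy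
      rw [hy₀] at hy
      calc Quotient.mk (orbitRel C G) y = Quotient.mk (orbitRel C G) ω.out := Quotient.sound hy
        _ = ω := Quotient.out_eq ω
  rw [hfiber]
  -- now: Nat.card C ∣ Nat.card (orbit C y₀) * Nat.card {x // x * y₀ = c * y₀ * x}
  rcases isEmpty_or_nonempty {x : G // x * y₀ = c * y₀ * x} with he | hne
  · rw [Nat.card_of_isEmpty (α := {x : G // x * y₀ = c * y₀ * x}), mul_zero]
    exact dvd_zero _
  · obtain ⟨x₀, hx₀⟩ := hne.some
    -- the solution set for fixed y₀ is a coset of the centralizer of y₀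
    have hXcard : Nat.card {x : G // x * y₀ = c * y₀ * x}
        = Nat.card (Subgroup.centralizer ({y₀} : Set G)) := by
      have k : x₀ * y₀ * x₀⁻¹ = c * y₀ := by rw [hx₀]; group
      refine Nat.card_congr ⟨fun x => ⟨x₀⁻¹ * x.1, ?_⟩, fun w => ⟨x₀ * w.1, ?_⟩, ?_, ?_⟩
      · rw [Subgroup.mem_centralizer_iff]
        rintro h hh
        rw [Set.mem_singleton_iff] at hh; subst hh
        calc y₀ * (x₀⁻¹ * x.1) = x₀⁻¹ * (x₀ * y₀ * x₀⁻¹) * x.1 := by group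
          _ = x₀⁻¹ * (c * y₀) * x.1 := by rw [k]
          _ = x₀⁻¹ * (c * y₀ * x.1) := by group
          _ = x₀⁻¹ * (x.1 * y₀) := by rw [← x.2]
          _ = x₀⁻¹ * x.1 * y₀ := by group
      · have hw : y₀ * w.1 = w.1 * y₀ := by
          have := w.2
          rw [Subgroup.mem_centralizer_iff] at this
          exact this y₀ (Set.mem_singleton _)
        calc x₀ * w.1 * y₀ = x₀ * (y₀ * w.1) := by rw [mul_assoc, hw]
          _ = x₀ * y₀ * w.1 := by rw [mul_assoc]
          _ = c * y₀ * x₀ * w.1 := by rw [hx₀]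
          _ = c * y₀ * (x₀ * w.1) := by rw [mul_assoc]
      · intro x; ext; simp
      · intro w; ext; simp
    rw [hXcard]
    -- orbit-stabilizer and Lagrange
    have orbstab : Nat.card (orbit C y₀) * Nat.card (stabilizer C y₀) = Nat.card C := by
      simp only [Nat.card_eq_fintype_card]
      exact card_orbit_mul_card_stabilizer_eq_card_group C y₀
    have stabdvd : Nat.card (stabilizer C y₀)
        ∣ Nat.card (Subgroup.centralizer ({y₀} : Set G)) := by
      have hmem : ∀ u : stabilizer C y₀,
          ConjAct.ofConjAct ((u : C) : ConjAct G) ∈ Subgroup.centralizer ({y₀} : Set G) := by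
        intro u
        rw [Subgroup.mem_centralizer_iff]
        rintro h hh
        rw [Set.mem_singleton_iff] at hh; subst hh
        have hu : (u : C) • y₀ = y₀ := u.2
        have : ConjAct.ofConjAct ((u : C) : ConjAct G) * y₀ *
            (ConjAct.ofConjAct ((u : C) : ConjAct G))⁻¹ = y₀ := hu
        calc y₀ * ConjAct.ofConjAct ((u : C) : ConjAct G)
            = (ConjAct.ofConjAct ((u : C) : ConjAct G) * y₀ *
              (ConjAct.ofConjAct ((u : C) : ConjAct G))⁻¹) *
              ConjAct.ofConjAct ((u : C) : ConjAct G) := by rw [this]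
          _ = ConjAct.ofConjAct ((u : C) : ConjAct G) * y₀ := by group
      let φ : stabilizer C y₀ →* Subgroup.centralizer ({y₀} : Set G) :=
        MonoidHom.mk' (fun u => ⟨ConjAct.ofConjAct ((u : C) : ConjAct G), hmem u⟩)
          (fun a b => by ext; simp [map_mul])
      have hφ : Function.Injective φ := by
        intro a b h
        have h1 : (φ a : G) = (φ b : G) := by rw [h]
        have h2 : ConjAct.ofConjAct ((a : C) : ConjAct G)
            = ConjAct.ofConjAct ((b : C) : ConjAct G) := h1
        exact Subtype.ext (Subtype.ext ((ConjAct.ofConjAct (G := G)).injective h2))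
      calc Nat.card (stabilizer C y₀) = Nat.card φ.range :=
            Nat.card_congr (MonoidHom.ofInjective hφ).toEquiv
        _ ∣ Nat.card (Subgroup.centralizer ({y₀} : Set G)) :=
            Subgroup.card_subgroup_dvd_card φ.range
    obtain ⟨m, hm⟩ := stabdvd
    exact ⟨m, by rw [hm, ← orbstab]; ring⟩

theorem stmt_17 (R : Type*) [Ring R] [Fintype R] (c : R) :
    Nat.card {u : Rˣ | (u : R) * c = c * u} ∣
      Nat.card {p : Rˣ × Rˣ | (p.1 : R) * p.2 = c * p.2 * p.1} := by
  classical
  by_cases hc : IsUnit c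
  · obtain ⟨c₀, rfl⟩ := hc
    have e1 : {u : Rˣ | (u : R) * ↑c₀ = ↑c₀ * ↑u} ≃ {u : Rˣ // u * c₀ = c₀ * u} :=
      Equiv.subtypeEquivRight fun u => by
        simp [Set.mem_setOf_eq, Units.ext_iff]
    have e2 : {p : Rˣ × Rˣ | (p.1 : R) * p.2 = ↑c₀ * p.2 * p.1} ≃
        {p : Rˣ × Rˣ // p.1 * p.2 = c₀ * p.2 * p.1} :=
      Equiv.subtypeEquivRight fun p => by
        simp [Set.mem_setOf_eq, Units.ext_iff]
    rw [Nat.card_congr e1, Nat.card_congr e2]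
    exact key c₀
  · have : IsEmpty {p : Rˣ × Rˣ | (p.1 : R) * p.2 = c * p.2 * p.1} := by
      refine ⟨fun p => hc ?_⟩
      obtain ⟨⟨x, y⟩, hp⟩ := p
      simp only [Set.mem_setOf_eq] at hp
      refine ⟨x * y * (y * x)⁻¹, ?_⟩
      calc ((x * y * (y * x)⁻¹ : Rˣ) : R) = ((x : R) * y) * ((y * x)⁻¹ : Rˣ) := by
            rw [Units.val_mul, Units.val_mul]
        _ = (c * (((y : R)) * ((x : R)))) * ((y * x)⁻¹ : Rˣ) := by
            rw [hp, mul_assoc c]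
        _ = (c * ((y * x : Rˣ) : R)) * ((y * x)⁻¹ : Rˣ) := by rw [Units.val_mul]
        _ = c := by rw [mul_assoc, Units.mul_inv, mul_one]
    rw [Nat.card_of_isEmpty (α := {p : Rˣ × Rˣ | (p.1 : R) * p.2 = c * p.2 * p.1})]
    exact dvd_zero _
end

section
/- Let G be a finite group and H ≤ G a subgroup. Then for any integers m, n, |H| divides |{(x, y) ∈ G² : xᵐ yⁿ ∈ H}|. -/
open Subgroup MulAction

universe u

section ClassSum
variable {K : Type u} [Group K]

private lemma mem_centralizer_single {k g : K} :
    g ∈ Subgroup.centralizer {k} ↔ k * g = g * k := by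
  rw [Subgroup.mem_centralizer_iff]; simp

private lemma conj_mem_centralizer {k c : K} (a : K) (hc : c ∈ Subgroup.centralizer {k}) :
    a * c * a⁻¹ ∈ Subgroup.centralizer {a * k * a⁻¹} := by
  rw [mem_centralizer_single] at hc ⊢
  calc (a*k*a⁻¹) * (a*c*a⁻¹) = a * (k*c) * a⁻¹ := by group
    _ = a * (c*k) * a⁻¹ := by rw [hc]
    _ = (a*c*a⁻¹) * (a*k*a⁻¹) := by group

private lemma card_centralizer_conj_s18 (a k : K) :
    Nat.card (Subgroup.centralizer {a * k * a⁻¹} : Subgroup K)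
      = Nat.card (Subgroup.centralizer {k} : Subgroup K) := by
  apply Nat.card_congr
  refine ⟨fun c => ⟨a⁻¹ * c.1 * a, ?_⟩, fun c => ⟨a * c.1 * a⁻¹, conj_mem_centralizer a c.2⟩,
    fun c => ?_, fun c => ?_⟩
  · have h := conj_mem_centralizer (a := a⁻¹) c.2
    have he : a⁻¹ * (a * k * a⁻¹) * a⁻¹⁻¹ = k := by group
    have he2 : a⁻¹ * c.1 * a⁻¹⁻¹ = a⁻¹ * c.1 * a := by rw [inv_inv]
    rwa [he, he2] at h
  · apply Subtype.ext; show a * (a⁻¹ * c.1 * a) * a⁻¹ = c.1; group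
  · apply Subtype.ext; show a⁻¹ * (a * c.1 * a⁻¹) * a = c.1; group
end ClassSum

open Classical in
private lemma class_sum_dvd {K : Type u} [Group K] [Fintype K] (f : K → ℕ)
    (hconj : ∀ a k : K, f (a * k * a⁻¹) = f k)
    (hdvd : ∀ k : K, Nat.card (Subgroup.centralizer {k} : Subgroup K) ∣ f k) :
    Nat.card K ∣ ∑ k : K, f k := by
  set c : K → ℕ := fun k => Nat.card (Subgroup.centralizer {k} : Subgroup K) with hc
  set φ : K → ℕ := fun k => f k / c k with hφ
  have hφconj : ∀ a k : K, φ (a * k * a⁻¹) = φ k := by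
    intro a k
    simp only [hφ, hc]
    rw [hconj, card_centralizer_conj_s18]
  have hfc : ∀ k, f k = c k * φ k := fun k => (Nat.mul_div_cancel' (hdvd k)).symm
  set B : ℕ := (∑ k : K, φ k) + 1 with hB
  have hφB : ∀ k, φ k < B := by
    intro k
    have : φ k ≤ ∑ k : K, φ k :=
      Finset.single_le_sum (fun i _ => Nat.zero_le _) (Finset.mem_univ k)
    omega
  -- the weighted set
  let W : Type u := {t : K × Fin B // t.2.val < φ t.1}
  letI : MulAction K W :=
    { smul := fun a t => ⟨(a * t.1.1 * a⁻¹, t.1.2), by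
        show t.1.2.val < φ (a * t.1.1 * a⁻¹); rw [hφconj]; exact t.2⟩
      one_smul := fun t => by
        apply Subtype.ext
        show (1 * t.1.1 * 1⁻¹, t.1.2) = t.1
        rw [Prod.ext_iff]; constructor
        · show 1 * t.1.1 * 1⁻¹ = t.1.1; group
        · rfl
      mul_smul := fun a b t => by
        apply Subtype.ext
        show ((a * b) * t.1.1 * (a * b)⁻¹, t.1.2) = (a * (b * t.1.1 * b⁻¹) * a⁻¹, t.1.2)
        rw [Prod.ext_iff]; constructor
        · show (a * b) * t.1.1 * (a * b)⁻¹ = a * (b * t.1.1 * b⁻¹) * a⁻¹; group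
        · rfl }
  letI : Fintype (orbitRel.Quotient K W) := Fintype.ofFinite _
  have hburn := MulAction.sum_card_fixedBy_eq_card_orbits_mul_card_group K W
  -- identify the Burnside sum with ∑ f
  have hsig : (∑ a : K, Fintype.card (fixedBy W a)) = ∑ k : K, f k := by
    have h1 : (∑ a : K, Fintype.card (fixedBy W a))
        = Fintype.card (Σ a : K, (fixedBy W a)) := Fintype.card_sigma.symm
    have E : (Σ a : K, (fixedBy W a)) ≃
        (Σ t : W, (Subgroup.centralizer {t.1.1} : Subgroup K)) := by
      refine ⟨fun p => ⟨p.2.1, ⟨p.1, ?_⟩⟩, fun q => ⟨q.2.1, ⟨q.1, ?_⟩⟩, fun p => ?_, fun q => ?_⟩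
      · -- p.1 ∈ centralizer of the base point
        have hfix : p.1 • (p.2 : W) = p.2 := p.2.2
        have : p.1 * (p.2 : W).1.1 * p.1⁻¹ = (p.2 : W).1.1 := by
          have := congrArg (fun w : W => w.1.1) hfix
          exact this
        rw [mem_centralizer_single]
        calc (p.2 : W).1.1 * p.1 = (p.1 * (p.2 : W).1.1 * p.1⁻¹) * p.1 := by rw [this]
          _ = p.1 * (p.2 : W).1.1 := by group
      · -- fixedness
        show (q.2 : K) • q.1 = q.1
        apply Subtype.ext
        have hcomm := mem_centralizer_single.mp q.2.2
        show ((q.2 : K) * q.1.1.1 * (q.2 : K)⁻¹, q.1.1.2) = q.1.1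
        rw [Prod.ext_iff]; constructor
        · show (q.2 : K) * q.1.1.1 * (q.2 : K)⁻¹ = q.1.1.1
          rw [← hcomm]; group
        · rfl
      · rfl
      · rfl
    have h2 : Fintype.card (Σ t : W, (Subgroup.centralizer {t.1.1} : Subgroup K))
        = ∑ t : W, c t.1.1 := by
      rw [Fintype.card_sigma]
      exact Finset.sum_congr rfl fun t _ => (Nat.card_eq_fintype_card (α := (Subgroup.centralizer {t.1.1} : Subgroup K))).symm
    have hfin : ∀ q : ℕ, q ≤ B → (Finset.univ.filter fun j : Fin B => j.val < q).card = q := by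
      intro q hq
      rw [Finset.card_filter]
      rw [Fin.sum_univ_eq_sum_range (fun i => if i < q then (1:ℕ) else 0)]
      rw [← Finset.sum_filter]
      have : (Finset.range B).filter (fun i => i < q) = Finset.range q := by
        ext i
        simp only [Finset.mem_filter, Finset.mem_range]
        omega
      rw [this, Finset.sum_const, Finset.card_range, smul_eq_mul, mul_one]
    have h3 : (∑ t : W, c (t : K × Fin B).1) = ∑ k : K, f k := by
      have hsub : (∑ t : W, c (t : K × Fin B).1)
          = ∑ t ∈ Finset.univ.filter (fun t : K × Fin B => t.2.val < φ t.1), c t.1 :=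
        (Finset.sum_subtype (p := fun t : K × Fin B => t.2.val < φ t.1) _ (by intro x; rw [Finset.mem_filter]; simp only [Finset.mem_univ, true_and]) (fun t => c t.1)).symm
      have hinner : ∀ k : K, (∑ j : Fin B, if (j : ℕ) < φ k then c k else 0) = f k := by
        intro k
        rw [Finset.sum_ite, Finset.sum_const, Finset.sum_const, smul_eq_mul, smul_eq_mul,
          mul_zero, add_zero, hfin (φ k) (hφB k).le, hfc k, mul_comm]
      rw [hsub, Finset.sum_filter, Fintype.sum_prod_type]
      exact Finset.sum_congr rfl fun k _ => hinner k
    rw [h1, Fintype.card_congr E, h2, h3]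
  rw [hsig] at hburn
  rw [Nat.card_eq_fintype_card]
  exact ⟨Fintype.card (orbitRel.Quotient K W), by rw [hburn, mul_comm]⟩

section Preimage
variable {G : Type u} [Group G] (N : Subgroup G) [N.Normal]

private lemma out_mul_mem (q : G ⧸ N) (a : G) (ha : a ∈ N) :
    (QuotientGroup.mk (q.out * a) : G ⧸ N) = q := by
  rw [QuotientGroup.mk_mul, (QuotientGroup.eq_one_iff a).mpr ha, mul_one,
    QuotientGroup.out_eq']

private lemma out_inv_mul_mem (x : G) :
    (QuotientGroup.mk x : G ⧸ N).out⁻¹ * x ∈ N :=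
  QuotientGroup.eq.mp (QuotientGroup.out_eq' (QuotientGroup.mk x))

private noncomputable def preim2Equiv (T : Set ((G ⧸ N) × (G ⧸ N))) :
    ((fun p : G × G => ((p.1 : G ⧸ N), (p.2 : G ⧸ N))) ⁻¹' T) ≃ ((N × N) × T) := by
  refine ⟨fun p => ((⟨((p.1.1 : G ⧸ N)).out⁻¹ * p.1.1, out_inv_mul_mem N _⟩,
                    ⟨((p.1.2 : G ⧸ N)).out⁻¹ * p.1.2, out_inv_mul_mem N _⟩),
                   ⟨((p.1.1 : G ⧸ N), (p.1.2 : G ⧸ N)), p.2⟩),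
          fun q => ⟨((q.2.1.1).out * q.1.1.1, (q.2.1.2).out * q.1.2.1), ?_⟩,
          fun p => ?_, fun q => ?_⟩
  · show ((QuotientGroup.mk ((q.2.1.1).out * q.1.1.1) : G ⧸ N),
          (QuotientGroup.mk ((q.2.1.2).out * q.1.2.1) : G ⧸ N)) ∈ T
    rw [out_mul_mem N _ _ q.1.1.2, out_mul_mem N _ _ q.1.2.2]
    exact q.2.2
  · apply Subtype.ext
    show (((p.1.1 : G ⧸ N)).out * (((p.1.1 : G ⧸ N)).out⁻¹ * p.1.1),
          ((p.1.2 : G ⧸ N)).out * (((p.1.2 : G ⧸ N)).out⁻¹ * p.1.2)) = p.1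
    rw [mul_inv_cancel_left, mul_inv_cancel_left]
  · have h1 : (QuotientGroup.mk ((q.2.1.1).out * q.1.1.1) : G ⧸ N) = q.2.1.1 :=
      out_mul_mem N _ _ q.1.1.2
    have h2 : (QuotientGroup.mk ((q.2.1.2).out * q.1.2.1) : G ⧸ N) = q.2.1.2 :=
      out_mul_mem N _ _ q.1.2.2
    refine Prod.ext (Prod.ext (Subtype.ext ?_) (Subtype.ext ?_)) (Subtype.ext (Prod.ext ?_ ?_))
    · show ((QuotientGroup.mk ((q.2.1.1).out * q.1.1.1) : G ⧸ N)).out⁻¹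
          * ((q.2.1.1).out * q.1.1.1) = q.1.1.1
      rw [h1, inv_mul_cancel_left]
    · show ((QuotientGroup.mk ((q.2.1.2).out * q.1.2.1) : G ⧸ N)).out⁻¹
          * ((q.2.1.2).out * q.1.2.1) = q.1.2.1
      rw [h2, inv_mul_cancel_left]
    · exact h1
    · exact h2

private lemma card_preim2 (T : Set ((G ⧸ N) × (G ⧸ N))) :
    Nat.card ((fun p : G × G => ((p.1 : G ⧸ N), (p.2 : G ⧸ N))) ⁻¹' T)
      = Nat.card N * Nat.card N * Nat.card T := by
  rw [Nat.card_congr (preim2Equiv N T), Nat.card_prod, Nat.card_prod]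

private lemma card_preim1 (T : Set (G ⧸ N)) :
    Nat.card (QuotientGroup.mk ⁻¹' T : Set G) = Nat.card N * Nat.card T := by
  rw [Nat.card_congr (QuotientGroup.preimageMkEquivSubgroupProdSet N T), Nat.card_prod]

end Preimage
section Main
set_option maxHeartbeats 1000000

private theorem main_aux : ∀ (cb : ℕ) (G : Type u) [Group G] [Fintype G],
    Nat.card G ≤ cb → ∀ (H : Subgroup G) (m n : ℤ),
    Nat.card H ∣ Nat.card {p : G × G | p.1 ^ m * p.2 ^ n ∈ H} := by
  intro cb
  induction cb with
  | zero =>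
    intro G _ _ hle H m n
    have := Nat.card_pos (α := G)
    omega
  | succ cb ih =>
    intro G _ _ hle H m n
    by_cases hz : H ⊓ Subgroup.center G = ⊥
    · -- Case B : H ∩ Z(G) = ⊥
      classical
      set S : Set (G × G) := {p | p.1 ^ m * p.2 ^ n ∈ H} with hSdef
      have conj_zpow : ∀ (a x : G) (k : ℤ), (a * x * a⁻¹) ^ k = a * x ^ k * a⁻¹ := by
        intro a x k
        rw [← MulAut.conj_apply, ← map_zpow, MulAut.conj_apply]
      letI actsmul : SMul (↥H) (↥S) := ⟨fun h p =>
        ⟨((h : G) * p.1.1 * (h : G)⁻¹, (h : G) * p.1.2 * (h : G)⁻¹), by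
          have hp : p.1.1 ^ m * p.1.2 ^ n ∈ H := p.2
          show ((h:G) * p.1.1 * (h:G)⁻¹) ^ m * ((h:G) * p.1.2 * (h:G)⁻¹) ^ n ∈ H
          rw [conj_zpow, conj_zpow]
          have heq : (h:G) * p.1.1 ^ m * (h:G)⁻¹ * ((h:G) * p.1.2 ^ n * (h:G)⁻¹)
              = (h:G) * (p.1.1 ^ m * p.1.2 ^ n) * (h:G)⁻¹ := by group
          rw [heq]
          exact H.mul_mem (H.mul_mem h.2 hp) (H.inv_mem h.2)⟩⟩
      letI act : MulAction (↥H) (↥S) :=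
        { one_smul := fun p => by
            apply Subtype.ext
            show (((1:H):G) * p.1.1 * ((1:H):G)⁻¹, ((1:H):G) * p.1.2 * ((1:H):G)⁻¹) = p.1
            simp
          mul_smul := fun a b p => by
            apply Subtype.ext
            show (((a*b : H):G) * p.1.1 * ((a*b : H):G)⁻¹, ((a*b : H):G) * p.1.2 * ((a*b : H):G)⁻¹)
              = ((a:G) * ((b:G) * p.1.1 * (b:G)⁻¹) * (a:G)⁻¹,
                 (a:G) * ((b:G) * p.1.2 * (b:G)⁻¹) * (a:G)⁻¹)
            rw [Prod.ext_iff]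
            constructor
            · show ((a*b : H):G) * p.1.1 * ((a*b : H):G)⁻¹ = _
              rw [Subgroup.coe_mul]; group
            · show ((a*b : H):G) * p.1.2 * ((a*b : H):G)⁻¹ = _
              rw [Subgroup.coe_mul]; group }
      letI : Fintype (↥S) := Fintype.ofFinite _
      letI : Fintype (↥H) := Fintype.ofFinite _
      letI : ∀ a : ↥H, Fintype (↥(MulAction.fixedBy (↥S) a)) := fun a => Fintype.ofFinite _
      letI : Fintype (MulAction.orbitRel.Quotient (↥H) (↥S)) := Fintype.ofFinite _
      have hburn := MulAction.sum_card_fixedBy_eq_card_orbits_mul_card_group (↥H) (↥S)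
      set f : ↥H → ℕ := fun a => if a = 1 then 0 else Nat.card (↥(MulAction.fixedBy (↥S) a))
        with hfdef
      -- conjugation invariance of f
      have hconj' : ∀ a k : ↥H, f (a * k * a⁻¹) = f k := by
        intro a k
        by_cases hk : k = 1
        · subst hk; simp [hfdef]
        · have hk2 : a * k * a⁻¹ ≠ 1 := by
            intro hcon
            apply hk
            have : k = a⁻¹ * (a * k * a⁻¹) * a := by group
            rw [this, hcon]; group
          simp only [hfdef, if_neg hk, if_neg hk2]
          apply Nat.card_congr
          refine ⟨fun x => ⟨a⁻¹ • x.1, ?_⟩, fun y => ⟨a • y.1, ?_⟩, fun x => ?_, fun y => ?_⟩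
          · have hx : (a * k * a⁻¹) • (x.1 : ↥S) = x.1 := MulAction.mem_fixedBy.mp x.2
            rw [MulAction.mem_fixedBy, smul_smul]
            have he : k * a⁻¹ = a⁻¹ * (a * k * a⁻¹) := by group
            rw [he, ← smul_smul, hx]
          · have hy : k • (y.1 : ↥S) = y.1 := MulAction.mem_fixedBy.mp y.2
            rw [MulAction.mem_fixedBy, smul_smul]
            have he : (a * k * a⁻¹) * a = a * k := by group
            rw [he, ← smul_smul, hy]
          · apply Subtype.ext; show a • (a⁻¹ • (x.1 : ↥S)) = x.1; rw [smul_inv_smul]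
          · apply Subtype.ext; show a⁻¹ • (a • (y.1 : ↥S)) = y.1; rw [inv_smul_smul]
      -- divisibility of f via induction hypothesis
      have hdvd' : ∀ k : ↥H,
          Nat.card (Subgroup.centralizer {k} : Subgroup (↥H)) ∣ f k := by
        intro k
        by_cases hk : k = 1
        · simp [hfdef, hk]
        · have hnc : (k : G) ∉ Subgroup.center G := by
            intro hcen
            have hmem : (k : G) ∈ H ⊓ Subgroup.center G := ⟨k.2, hcen⟩
            rw [hz, Subgroup.mem_bot] at hmem
            exact hk (by apply Subtype.ext; rw [hmem]; rfl)
          set C' : Subgroup G := Subgroup.centralizer {(k : G)} with hC'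
          obtain ⟨g, hg⟩ : ∃ g : G, ¬ (g * (k : G) = (k : G) * g) := by
            by_contra hcon
            push_neg at hcon
            exact hnc (Subgroup.mem_center_iff.mpr hcon)
          have hgS : g ∉ C' := by
            intro hgc
            exact hg (mem_centralizer_single.mp hgc).symm
          have hCle : Nat.card (↥C') ≤ cb := by
            letI : Fintype (↥C') := Fintype.ofFinite _
            have hlt : Fintype.card (↥C') < Fintype.card G := by
              apply Fintype.card_lt_of_injective_of_notMem
                (fun c : ↥C' => (c : G)) Subtype.coe_injective (b := g)
              intro hrange
              obtain ⟨c, hc⟩ := hrange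
              exact hgS (hc ▸ c.2)
            have e1 : Nat.card (↥C') = Fintype.card (↥C') := Nat.card_eq_fintype_card
            have e2 : Nat.card G = Fintype.card G := Nat.card_eq_fintype_card
            omega
          have hIH := ih (↥C') hCle (H.subgroupOf C') m n
          -- identify centralizer in H with the subgroup H.subgroupOf C'
          have hcent : Nat.card (Subgroup.centralizer {k} : Subgroup (↥H))
              = Nat.card (↥(H.subgroupOf C')) := by
            apply Nat.card_congr
            refine ⟨fun a => ⟨⟨(a.1 : G), ?_⟩, a.1.2⟩,
                    fun b => ⟨⟨(b.1 : G), b.2⟩, ?_⟩, fun a => ?_, fun b => ?_⟩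
            · rw [mem_centralizer_single]
              have hcm := mem_centralizer_single.mp a.2
              have := congrArg (fun z : ↥H => (z : G)) hcm
              simpa using this
            · rw [mem_centralizer_single]
              apply Subtype.ext
              have := mem_centralizer_single.mp b.1.2
              simpa using this
            · apply Subtype.ext; apply Subtype.ext; rfl
            · apply Subtype.ext; apply Subtype.ext; rfl
          -- identify the fixed points with the solution set in C'
          have hfix : f k = Nat.card {q : ↥C' × ↥C' | q.1 ^ m * q.2 ^ n ∈ H.subgroupOf C'} := by
            simp only [hfdef, if_neg hk]
            apply Nat.card_congr
            have hxc : ∀ x : G, (k : G) * x * (k : G)⁻¹ = x → x ∈ C' := by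
              intro x hx
              rw [hC', mem_centralizer_single]
              calc (k:G) * x = ((k:G) * x * (k:G)⁻¹) * (k:G) := by group
                _ = x * (k:G) := by rw [hx]
            have hcx : ∀ x : G, x ∈ C' → (k : G) * x * (k : G)⁻¹ = x := by
              intro x hx
              have := mem_centralizer_single.mp hx
              rw [this]; group
            refine ⟨fun p => ⟨(⟨p.1.1.1, ?_⟩, ⟨p.1.1.2, ?_⟩), ?_⟩,
                    fun q => ⟨⟨((q.1.1 : G), (q.1.2 : G)), ?_⟩, ?_⟩, fun p => ?_, fun q => ?_⟩
            · have hfx : k • (p.1 : ↥S) = p.1 := p.2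
              have := congrArg (fun w : ↥S => w.1.1) hfx
              exact hxc _ this
            · have hfx : k • (p.1 : ↥S) = p.1 := p.2
              have := congrArg (fun w : ↥S => w.1.2) hfx
              exact hxc _ this
            · show _ ∈ H.subgroupOf C'
              rw [Subgroup.mem_subgroupOf]
              have hp : p.1.1.1 ^ m * p.1.1.2 ^ n ∈ H := p.1.2
              simpa using hp
            · have hq := q.2
              simp only [Set.mem_setOf_eq] at hq
              rw [Subgroup.mem_subgroupOf] at hq
              show ((q.1.1 : G)) ^ m * ((q.1.2 : G)) ^ n ∈ H
              simpa using hq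
            · show k • (⟨((q.1.1 : G), (q.1.2 : G)), _⟩ : ↥S) = _
              apply Subtype.ext
              show ((k:G) * (q.1.1 : G) * (k:G)⁻¹, (k:G) * (q.1.2 : G) * (k:G)⁻¹) = _
              rw [Prod.ext_iff]
              exact ⟨hcx _ q.1.1.2, hcx _ q.1.2.2⟩
            · apply Subtype.ext; apply Subtype.ext; rfl
            · apply Subtype.ext
              rw [Prod.ext_iff]
              constructor <;> (apply Subtype.ext; rfl)
          rw [hcent, hfix]
          exact hIH
      have hfdvd : Nat.card (↥H) ∣ ∑ a : ↥H, f a := class_sum_dvd f hconj' hdvd'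
      -- split the Burnside sum
      have hfix1 : Fintype.card (↥(MulAction.fixedBy (↥S) (1 : ↥H))) = Nat.card (↥S) := by
        rw [← Nat.card_eq_fintype_card]
        apply Nat.card_congr
        refine ⟨fun x => x.1, fun x => ⟨x, ?_⟩, fun x => rfl, fun x => rfl⟩
        show (1 : ↥H) • x = x
        rw [one_smul]
      have hsplit : (∑ a : ↥H, Fintype.card (↥(MulAction.fixedBy (↥S) a)))
          = Nat.card (↥S) + ∑ a : ↥H, f a := by
        have hpt : ∀ a : ↥H, Fintype.card (↥(MulAction.fixedBy (↥S) a))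
            = (if a = 1 then Nat.card (↥S) else 0) + f a := by
          intro a
          by_cases ha : a = 1
          · subst ha; rw [hfix1]; simp [hfdef]
          · simp [hfdef, ha, Nat.card_eq_fintype_card]
        rw [Finset.sum_congr rfl (fun a _ => hpt a), Finset.sum_add_distrib,
          Finset.sum_ite_eq' Finset.univ (1 : ↥H) (fun _ => Nat.card (↥S))]
        simp
      have htot : Nat.card (↥H) ∣ Nat.card (↥S) + ∑ a : ↥H, f a := by
        rw [← hsplit, hburn, Nat.card_eq_fintype_card]
        exact Dvd.intro_left _ rfl
      have hfin := Nat.dvd_sub htot hfdvd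
      rw [Nat.add_sub_cancel] at hfin
      exact hfin
    · -- Case A : nontrivial central part
      set N : Subgroup G := H ⊓ Subgroup.center G with hN
      haveI hNnorm : N.Normal := by
        constructor
        intro x hx g
        have hcen : g * x * g⁻¹ = x := by
          have := (Subgroup.mem_center_iff.mp hx.2 g)
          rw [this, mul_inv_cancel_right]
        rw [hcen]; exact hx
      letI : Fintype (G ⧸ N) := Fintype.ofFinite _
      set Hbar : Subgroup (G ⧸ N) := Subgroup.map (QuotientGroup.mk' N) H with hHbar
      set Sbar : Set ((G ⧸ N) × (G ⧸ N)) := {q | q.1 ^ m * q.2 ^ n ∈ Hbar} with hSbar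
      have hcardG : Nat.card G = Nat.card (G ⧸ N) * Nat.card N :=
        Subgroup.card_eq_card_quotient_mul_card_subgroup N
      have hN1 : 1 < Nat.card N := (Subgroup.one_lt_card_iff_ne_bot (H := N)).mpr hz
      have hQpos : 0 < Nat.card (G ⧸ N) := Nat.card_pos
      have hQle : Nat.card (G ⧸ N) ≤ cb := by
        have h2 : Nat.card (G ⧸ N) * 2 ≤ Nat.card (G ⧸ N) * Nat.card N :=
          Nat.mul_le_mul_left _ hN1
        omega
      have hIH := ih (G ⧸ N) hQle Hbar m n
      -- membership transfer
      have hmem : ∀ w : G, w ∈ H ↔ (QuotientGroup.mk w : G ⧸ N) ∈ Hbar := by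
        intro w
        constructor
        · intro hw
          exact ⟨w, hw, rfl⟩
        · intro hw
          obtain ⟨v, hv, hve⟩ := hw
          have hinv : v⁻¹ * w ∈ N := QuotientGroup.eq.mp hve
          have : w = v * (v⁻¹ * w) := by rw [mul_inv_cancel_left]
          rw [this]
          exact H.mul_mem hv ((inf_le_left : N ≤ H) hinv)
      have hSpre : {p : G × G | p.1 ^ m * p.2 ^ n ∈ H}
          = (fun p : G × G => ((p.1 : G ⧸ N), (p.2 : G ⧸ N))) ⁻¹' Sbar := by
        ext p
        simp only [Set.mem_setOf_eq, Set.mem_preimage, hSbar]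
        have hcast : ((p.1 : G ⧸ N)) ^ m * ((p.2 : G ⧸ N)) ^ n
            = (QuotientGroup.mk (p.1 ^ m * p.2 ^ n) : G ⧸ N) := by
          rw [QuotientGroup.mk_mul, QuotientGroup.mk_zpow, QuotientGroup.mk_zpow]
        rw [hcast]
        exact hmem _
      have hHpre : (QuotientGroup.mk ⁻¹' ((Hbar : Set (G ⧸ N))) : Set G) = (H : Set G) := by
        ext x
        simp only [Set.mem_preimage, SetLike.mem_coe]
        exact (hmem x).symm
      have hcardS : Nat.card {p : G × G | p.1 ^ m * p.2 ^ n ∈ H}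
          = Nat.card N * Nat.card N * Nat.card Sbar := by
        rw [hSpre]; exact card_preim2 N Sbar
      have hcardH : Nat.card H = Nat.card N * Nat.card Hbar := by
        have h1 := card_preim1 N (Hbar : Set (G ⧸ N))
        rw [hHpre] at h1
        have h2 : Nat.card (H : Set G) = Nat.card H := Nat.card_congr (Equiv.setCongr rfl)
        have h3 : Nat.card (Hbar : Set (G ⧸ N)) = Nat.card Hbar := Nat.card_congr (Equiv.setCongr rfl)
        rw [h2, h3] at h1
        exact h1
      rw [hcardS, hcardH]
      exact dvd_trans (mul_dvd_mul_left _ hIH) ⟨Nat.card N, by ring⟩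

end Main

theorem stmt_18 (G : Type*) [Group G] [Fintype G] (H : Subgroup G) (m n : ℤ) :
    Nat.card H ∣ Nat.card {p : G × G | p.1 ^ m * p.2 ^ n ∈ H} :=
  main_aux (Nat.card G) G le_rfl H m n
end
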